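/- arXiv:2112.06225 — 11 statements merged into one kernel-verified Lean document; each statement's English description precedes it below -/
import Mathlib

section
/- The envelope-area score is submodular on nonempty subsets: for any finite set T of time series, any nonempty subsets W ⊆ U ⊆ T, and any t ∈ T, one has Score₁(U ∪ {t}) − Score₁(U) ≤ Score₁(W ∪ {t}) − Score₁(W). -/
open Finset
open scoped Classical

/-- The envelope-area score of a finite set `U` of time series over a finite domain `D`:
`Score₁(U) = ∑_{i ∈ D} (max_{t ∈ U} t(i) − min_{t ∈ U} t(i))`. -/
noncomputable def score1 {D : Type*} [Fintype D] (U : Finset (D → ℝ)) : ℝ :=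
  ∑ i : D, (sSup ((fun f => f i) '' (U : Set (D → ℝ))) -
            sInf ((fun f => f i) '' (U : Set (D → ℝ))))

/-! The score is a sum over `D` of `sSup - sInf` of the values at `i`, and both the gain
`sSup (insert x s) - sSup s = max (x - sSup s) 0` and the gain
`sInf s - sInf (insert x s) = max (sInf s - x) 0` shrink as `s` grows. -/

section InsertGain

variable {α : Type*} [ConditionallyCompleteLinearOrder α] [AddCommGroup α] [IsOrderedAddMonoid α]
  (x : α) {s t : Set α}

theorem csSup_insert_sub_csSup_le (hs : s.Nonempty) (hst : s ⊆ t) (ht : BddAbove t) :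
    sSup (insert x t) - sSup t ≤ sSup (insert x s) - sSup s := by
  rw [csSup_insert ht (hs.mono hst), csSup_insert (ht.mono hst) hs,
    ← max_sub_sub_right, ← max_sub_sub_right, sub_self, sub_self]
  gcongr

theorem csInf_sub_csInf_insert_le (hs : s.Nonempty) (hst : s ⊆ t) (ht : BddBelow t) :
    sInf t - sInf (insert x t) ≤ sInf s - sInf (insert x s) := by
  rw [csInf_insert ht (hs.mono hst), csInf_insert (ht.mono hst) hs,
    ← max_sub_sub_left, ← max_sub_sub_left, sub_self, sub_self]
  gcongr

end InsertGain

theorem score1_submodular_general {D : Type*} [Fintype D]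
    (U W : Finset (D → ℝ)) (t : D → ℝ)
    (hW : W.Nonempty) (hWU : W ⊆ U) :
    score1 (insert t U) - score1 U ≤ score1 (insert t W) - score1 W := by
  simp only [score1, ← sum_sub_distrib]
  refine sum_le_sum fun i _ => ?_
  have hWi : ((fun f : D → ℝ => f i) '' W).Nonempty := (coe_nonempty.mpr hW).image _
  have hWUi := Set.image_mono (f := fun f : D → ℝ => f i) (coe_subset.mpr hWU)
  have hUi := U.finite_toSet.image (fun f : D → ℝ => f i)
  simp only [coe_insert, Set.image_insert_eq]
  linarith [csSup_insert_sub_csSup_le (t i) hWi hWUi hUi.bddAbove,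
    csInf_sub_csInf_insert_le (t i) hWi hWUi hUi.bddBelow]

/-- The envelope-area score is submodular on nonempty subsets: for any finite set `T` of
time series, any nonempty subsets `W ⊆ U ⊆ T` and any `t ∈ T`,
`Score₁(U ∪ {t}) − Score₁(U) ≤ Score₁(W ∪ {t}) − Score₁(W)`. -/
theorem score1_submodular {D : Type*} [Fintype D] [Nonempty D]
    (T U W : Finset (D → ℝ)) (t : D → ℝ)
    (hW : W.Nonempty) (hWU : W ⊆ U) (hUT : U ⊆ T) (ht : t ∈ T) :
    score1 (insert t U) - score1 U ≤ score1 (insert t W) - score1 W :=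
  score1_submodular_general U W t hW hWU
end

section
/- (Proposition 2, chain property.) Let T be a finite set of time series, x ∈ T, and 0 < α < β. Let V ⊆ T with x ∈ V minimize Reg(·;α) over subsets containing x, and let U ⊆ T with x ∈ U minimize Reg(·;β) over subsets containing x and have maximum cardinality among such minimizers. Then V ⊆ U. -/
open Finset
open scoped Classical

/-- The regularized score `Reg(U;α) = Score₁(U) − α|U|`. -/
noncomputable def reg {D : Type*} [Fintype D] (α : ℝ) (U : Finset (D → ℝ)) : ℝ :=
  score1 U - α * U.card

lemma score1_submod {D : Type*} [Fintype D] (U V : Finset (D → ℝ)) (x : D → ℝ)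
    (hxU : x ∈ U) (hxV : x ∈ V) :
    score1 (U ∪ V) + score1 (U ∩ V) ≤ score1 U + score1 V := by
  unfold score1
  rw [← Finset.sum_add_distrib, ← Finset.sum_add_distrib]
  apply Finset.sum_le_sum
  intro i _
  set g := fun f : D → ℝ => f i with hg
  have hne : ∀ (W : Finset (D → ℝ)), x ∈ W → (g '' (W : Set (D → ℝ))).Nonempty :=
    fun W hxW => ⟨g x, Set.mem_image_of_mem g hxW⟩
  have hbddA : ∀ (W : Finset (D → ℝ)), BddAbove (g '' (W : Set (D → ℝ))) :=
    fun W => (W.finite_toSet.image g).bddAbove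
  have hbddB : ∀ (W : Finset (D → ℝ)), BddBelow (g '' (W : Set (D → ℝ))) :=
    fun W => (W.finite_toSet.image g).bddBelow
  have hxUV : x ∈ U ∩ V := Finset.mem_inter.mpr ⟨hxU, hxV⟩
  have himU : (g '' ((U ∪ V : Finset (D → ℝ)) : Set (D → ℝ)))
      = g '' (U : Set (D → ℝ)) ∪ g '' (V : Set (D → ℝ)) := by
    rw [Finset.coe_union, Set.image_union]
  have hSupUnion : sSup (g '' ((U ∪ V : Finset (D → ℝ)) : Set (D → ℝ)))
      = max (sSup (g '' (U : Set (D → ℝ)))) (sSup (g '' (V : Set (D → ℝ)))) := by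
    rw [himU]
    exact csSup_union (hbddA U) (hne U hxU) (hbddA V) (hne V hxV)
  have hInfUnion : sInf (g '' ((U ∪ V : Finset (D → ℝ)) : Set (D → ℝ)))
      = min (sInf (g '' (U : Set (D → ℝ)))) (sInf (g '' (V : Set (D → ℝ)))) := by
    rw [himU]
    exact csInf_union (hbddB U) (hne U hxU) (hbddB V) (hne V hxV)
  have hsubU : g '' ((U ∩ V : Finset (D → ℝ)) : Set (D → ℝ)) ⊆ g '' (U : Set (D → ℝ)) := by
    apply Set.image_mono
    rw [Finset.coe_inter]; exact Set.inter_subset_left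
  have hsubV : g '' ((U ∩ V : Finset (D → ℝ)) : Set (D → ℝ)) ⊆ g '' (V : Set (D → ℝ)) := by
    apply Set.image_mono
    rw [Finset.coe_inter]; exact Set.inter_subset_right
  have hSupIU : sSup (g '' ((U ∩ V : Finset (D → ℝ)) : Set (D → ℝ)))
      ≤ sSup (g '' (U : Set (D → ℝ))) :=
    csSup_le_csSup (hbddA U) (hne _ hxUV) hsubU
  have hSupIV : sSup (g '' ((U ∩ V : Finset (D → ℝ)) : Set (D → ℝ)))
      ≤ sSup (g '' (V : Set (D → ℝ))) :=
    csSup_le_csSup (hbddA V) (hne _ hxUV) hsubV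
  have hInfIU : sInf (g '' (U : Set (D → ℝ)))
      ≤ sInf (g '' ((U ∩ V : Finset (D → ℝ)) : Set (D → ℝ))) :=
    csInf_le_csInf (hbddB U) (hne _ hxUV) hsubU
  have hInfIV : sInf (g '' (V : Set (D → ℝ)))
      ≤ sInf (g '' ((U ∩ V : Finset (D → ℝ)) : Set (D → ℝ))) :=
    csInf_le_csInf (hbddB V) (hne _ hxUV) hsubV
  rw [hSupUnion, hInfUnion]
  have e1 := max_add_min (sSup (g '' (U : Set (D → ℝ)))) (sSup (g '' (V : Set (D → ℝ))))
  have e2 := min_add_max (sInf (g '' (U : Set (D → ℝ)))) (sInf (g '' (V : Set (D → ℝ))))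
  have e3 := le_min hSupIU hSupIV
  have e4 := max_le hInfIU hInfIV
  linarith

/-- Proposition 2 (chain property): let `0 < α < β`, let `V` minimize `Reg(·;α)` over
subsets of `T` containing `x`, and let `U` minimize `Reg(·;β)` over subsets of `T`
containing `x`, with maximum cardinality among such minimizers. Then `V ⊆ U`. -/
theorem regband_chain {D : Type*} [Fintype D] [Nonempty D]
    (T : Finset (D → ℝ)) (x : D → ℝ) (hx : x ∈ T)
    (α β : ℝ) (hα : 0 < α) (hαβ : α < β)
    (V : Finset (D → ℝ)) (hVT : V ⊆ T) (hxV : x ∈ V)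
    (hVopt : ∀ W ⊆ T, x ∈ W → reg α V ≤ reg α W)
    (U : Finset (D → ℝ)) (hUT : U ⊆ T) (hxU : x ∈ U)
    (hUopt : ∀ W ⊆ T, x ∈ W → reg β U ≤ reg β W)
    (hUmax : ∀ W ⊆ T, x ∈ W → reg β W = reg β U → W.card ≤ U.card) :
    V ⊆ U := by
  have hxUV : x ∈ U ∩ V := Finset.mem_inter.mpr ⟨hxU, hxV⟩
  have hxUuV : x ∈ U ∪ V := Finset.mem_union_left _ hxU
  have hIT : U ∩ V ⊆ T := (Finset.inter_subset_left).trans hUT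
  have hUnT : U ∪ V ⊆ T := Finset.union_subset hUT hVT
  have h1 : reg α V ≤ reg α (U ∩ V) := hVopt _ hIT hxUV
  have h2 : reg β U ≤ reg β (U ∪ V) := hUopt _ hUnT hxUuV
  have hsub := score1_submod U V x hxU hxV
  have hcard : ((U ∪ V).card : ℝ) + ((U ∩ V).card : ℝ) = (U.card : ℝ) + (V.card : ℝ) := by
    exact_mod_cast congrArg (Nat.cast (R := ℝ)) (Finset.card_union_add_card_inter U V)
  have hcardIV : ((U ∩ V).card : ℝ) ≤ (V.card : ℝ) := by
    exact_mod_cast Finset.card_le_card (Finset.inter_subset_right)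
  have hle : reg β (U ∪ V) ≤ reg β U := by
    unfold reg at h1 h2 ⊢
    unfold reg at *
    nlinarith [mul_nonneg (le_of_lt (sub_pos.mpr hαβ)) (sub_nonneg.mpr hcardIV)]
  have heq : reg β (U ∪ V) = reg β U := le_antisymm hle h2
  have hcardle : (U ∪ V).card ≤ U.card := hUmax _ hUnT hxUuV heq
  have : U ∪ V = U := (Finset.eq_of_subset_of_card_le Finset.subset_union_left hcardle).symm
  intro v hv
  rw [← this]
  exact Finset.mem_union_right _ hv
end

section
/- (Lemma 1.) Let T be a finite set of time series, x ∈ T, and let U₀ ⊊ U₁ ⊊ … ⊊ U_p be the list of all distinct regularized bands ordered by inclusion. Define f(a,b) = (Score₁(U_b) − Score₁(U_a)) / (|U_b| − |U_a|) for a < b. If α > 0 and U_i is the regularized band for α, then f(i−1, i) ≤ α whenever i ≥ 1, and α < f(i, i+1) whenever i < p. -/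
open Finset
open scoped Classical

/-- `U` is the regularized band of `T` (with seed `x ∈ U`) for the parameter `α`:
it minimizes `Reg(·;α) = Score₁(·) − α|·|` over all subsets of `T` containing `x`,
and has maximum cardinality among such minimizers (ties broken towards larger sets). -/
def IsRegBand {D : Type*} [Fintype D] (T : Finset (D → ℝ)) (x : D → ℝ) (α : ℝ)
    (U : Finset (D → ℝ)) : Prop :=
  U ⊆ T ∧ x ∈ U ∧
  (∀ V ⊆ T, x ∈ V → reg α U ≤ reg α V) ∧
  (∀ V ⊆ T, x ∈ V → reg α V = reg α U → V.card ≤ U.card)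

/-- Lemma 1: let `U 0 ⊊ U 1 ⊊ … ⊊ U p` be the list of all distinct regularized bands of `T`
(with seed `x ∈ T`) ordered by inclusion, and let
`f a b = (Score₁(U b) − Score₁(U a)) / (|U b| − |U a|)`.
If `α > 0` and `U i` is the regularized band for `α`, then `f (i−1) i ≤ α` whenever `i ≥ 1`,
and `α < f i (i+1)` whenever `i < p`. -/
theorem regband_ratio_bounds {D : Type*} [Fintype D] [Nonempty D]
    (T : Finset (D → ℝ)) (x : D → ℝ) (hx : x ∈ T)
    (p : ℕ) (U : ℕ → Finset (D → ℝ))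
    (hchain : ∀ a b : ℕ, a < b → b ≤ p → U a ⊂ U b)
    (hband : ∀ a ≤ p, ∃ α : ℝ, 0 < α ∧ IsRegBand T x α (U a))
    (hall : ∀ α : ℝ, 0 < α → ∀ W : Finset (D → ℝ), IsRegBand T x α W → ∃ a ≤ p, U a = W)
    (f : ℕ → ℕ → ℝ)
    (hf : ∀ a b : ℕ, f a b =
      (score1 (U b) - score1 (U a)) / (((U b).card : ℝ) - ((U a).card : ℝ)))
    (α : ℝ) (hα : 0 < α) (i : ℕ) (hip : i ≤ p) (hUi : IsRegBand T x α (U i)) :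
    (1 ≤ i → f (i - 1) i ≤ α) ∧ (i < p → α < f i (i + 1)) := by
  constructor
  · intro h1
    have hsub := hchain (i - 1) i (by omega) hip
    have hc : (U (i - 1)).card < (U i).card := Finset.card_lt_card hsub
    have hcr : (0 : ℝ) < ((U i).card : ℝ) - ((U (i - 1)).card : ℝ) := by
      have : ((U (i - 1)).card : ℝ) < ((U i).card : ℝ) := by exact_mod_cast hc
      linarith
    obtain ⟨β, hβ, hB⟩ := hband (i - 1) (by omega)
    have hle := hUi.2.2.1 (U (i - 1)) hB.1 hB.2.1
    unfold reg at hle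
    rw [hf, div_le_iff₀ hcr, mul_sub]
    linarith
  · intro h2
    have hsub := hchain i (i + 1) (by omega) (by omega)
    have hc : (U i).card < (U (i + 1)).card := Finset.card_lt_card hsub
    have hcr : (0 : ℝ) < ((U (i + 1)).card : ℝ) - ((U i).card : ℝ) := by
      have : ((U i).card : ℝ) < ((U (i + 1)).card : ℝ) := by exact_mod_cast hc
      linarith
    obtain ⟨β, hβ, hB⟩ := hband (i + 1) (by omega)
    have hle := hUi.2.2.1 (U (i + 1)) hB.1 hB.2.1
    have hne : reg α (U (i + 1)) ≠ reg α (U i) := by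
      intro h
      exact absurd (hUi.2.2.2 (U (i + 1)) hB.1 hB.2.1 h) (not_le.2 hc)
    have hlt : reg α (U i) < reg α (U (i + 1)) := lt_of_le_of_ne hle (Ne.symm hne)
    unfold reg at hlt
    rw [hf, lt_div_iff₀ hcr, mul_sub]
    linarith
end

section
/- Let T be a finite set of time series, x ∈ T, and let U₀ ⊊ U₁ ⊊ … ⊊ U_p be the list of all distinct regularized bands ordered by inclusion. Define f(a,b) = (Score₁(U_b) − Score₁(U_a)) / (|U_b| − |U_a|) for a < b. Then f is monotone in both indices: for indices a ≤ x′ and b ≤ y′ with a < b and x′ < y′, f(a,b) ≤ f(x′,y′). -/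
open Finset
open scoped Classical

/-- Let `U 0 ⊊ U 1 ⊊ … ⊊ U p` be the list of all distinct regularized bands of `T`
(with seed `x ∈ T`) ordered by inclusion, and let
`f a b = (Score₁(U b) − Score₁(U a)) / (|U b| − |U a|)` for `a < b`.
Then `f` is monotone in both indices: for `a ≤ a'` and `b ≤ b'` with `a < b` and
`a' < b'` (all indices at most `p`), one has `f a b ≤ f a' b'`. -/
theorem regband_ratio_monotone {D : Type*} [Fintype D] [Nonempty D]
    (T : Finset (D → ℝ)) (x : D → ℝ) (hx : x ∈ T)
    (p : ℕ) (U : ℕ → Finset (D → ℝ))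
    (hchain : ∀ a b : ℕ, a < b → b ≤ p → U a ⊂ U b)
    (hband : ∀ a ≤ p, ∃ α : ℝ, 0 < α ∧ IsRegBand T x α (U a))
    (hall : ∀ α : ℝ, 0 < α → ∀ W : Finset (D → ℝ), IsRegBand T x α W → ∃ a ≤ p, U a = W)
    (f : ℕ → ℕ → ℝ)
    (hf : ∀ a b : ℕ, f a b =
      (score1 (U b) - score1 (U a)) / (((U b).card : ℝ) - ((U a).card : ℝ)))
    (a b a' b' : ℕ) (haa' : a ≤ a') (hbb' : b ≤ b')
    (hab : a < b) (hab' : a' < b') (hb'p : b' ≤ p) :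
    f a b ≤ f a' b' := by
  have hsub : ∀ c ≤ p, U c ⊆ T ∧ x ∈ U c := by
    intro c hc
    obtain ⟨α, _, h⟩ := hband c hc
    exact ⟨h.1, h.2.1⟩
  have hn : ∀ u v : ℕ, u < v → v ≤ p → ((U u).card : ℝ) < ((U v).card : ℝ) := by
    intro u v huv hvp
    exact_mod_cast Finset.card_lt_card (hchain u v huv hvp)
  -- consecutive-slope inequality
  have hstep : ∀ u v w : ℕ, u < v → v < w → w ≤ p → f u v ≤ f v w := by
    intro u v w huv hvw hwp
    have hvp : v ≤ p := le_of_lt (lt_of_lt_of_le hvw hwp)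
    have hup : u ≤ p := le_of_lt (lt_of_lt_of_le huv hvp)
    obtain ⟨α, hα, hb⟩ := hband v hvp
    have h1 : reg α (U v) ≤ reg α (U u) := hb.2.2.1 (U u) (hsub u hup).1 (hsub u hup).2
    have h2 : reg α (U v) ≤ reg α (U w) := hb.2.2.1 (U w) (hsub w hwp).1 (hsub w hwp).2
    have d1 : (0:ℝ) < ((U v).card : ℝ) - ((U u).card : ℝ) := sub_pos.2 (hn u v huv hvp)
    have d2 : (0:ℝ) < ((U w).card : ℝ) - ((U v).card : ℝ) := sub_pos.2 (hn v w hvw hwp)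
    simp only [reg] at h1 h2
    have e1 : score1 (U v) - score1 (U u) ≤ α * (((U v).card : ℝ) - ((U u).card : ℝ)) := by
      linarith
    have e2 : α * (((U w).card : ℝ) - ((U v).card : ℝ)) ≤ score1 (U w) - score1 (U v) := by
      linarith
    rw [hf u v, hf v w, div_le_div_iff₀ d1 d2]
    calc (score1 (U v) - score1 (U u)) * (((U w).card : ℝ) - ((U v).card : ℝ))
        ≤ (α * (((U v).card : ℝ) - ((U u).card : ℝ))) *
            (((U w).card : ℝ) - ((U v).card : ℝ)) :=
          mul_le_mul_of_nonneg_right e1 d2.le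
      _ = (α * (((U w).card : ℝ) - ((U v).card : ℝ))) *
            (((U v).card : ℝ) - ((U u).card : ℝ)) := by ring
      _ ≤ (score1 (U w) - score1 (U v)) * (((U v).card : ℝ) - ((U u).card : ℝ)) :=
          mul_le_mul_of_nonneg_right e2 d1.le
  -- mediant inequality
  have hmed : ∀ e₁ e₂ d₁ d₂ : ℝ, 0 < d₁ → 0 < d₂ → e₁ / d₁ ≤ e₂ / d₂ →
      e₁ / d₁ ≤ (e₁ + e₂) / (d₁ + d₂) ∧ (e₁ + e₂) / (d₁ + d₂) ≤ e₂ / d₂ := by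
    intro e₁ e₂ d₁ d₂ h1 h2 h
    rw [div_le_div_iff₀ h1 h2] at h
    constructor
    · rw [div_le_div_iff₀ h1 (by linarith)]; nlinarith
    · rw [div_le_div_iff₀ (by linarith) h2]; nlinarith
  have hmidf : ∀ u v w : ℕ, u < v → v < w → w ≤ p →
      f u w = ((score1 (U v) - score1 (U u)) + (score1 (U w) - score1 (U v))) /
        ((((U v).card : ℝ) - ((U u).card : ℝ)) + (((U w).card : ℝ) - ((U v).card : ℝ))) := by
    intro u v w _ _ _
    rw [hf u w]
    congr 1 <;> ring
  have mono_right : ∀ u v w : ℕ, u < v → v < w → w ≤ p → f u v ≤ f u w := by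
    intro u v w huv hvw hwp
    have hvp : v ≤ p := le_of_lt (lt_of_lt_of_le hvw hwp)
    have d1 : (0:ℝ) < ((U v).card : ℝ) - ((U u).card : ℝ) := sub_pos.2 (hn u v huv hvp)
    have d2 : (0:ℝ) < ((U w).card : ℝ) - ((U v).card : ℝ) := sub_pos.2 (hn v w hvw hwp)
    have h := hstep u v w huv hvw hwp
    rw [hf u v, hf v w] at h
    have := (hmed _ _ _ _ d1 d2 h).1
    rw [hmidf u v w huv hvw hwp, hf u v]
    exact this
  have mono_left : ∀ u v w : ℕ, u < v → v < w → w ≤ p → f u w ≤ f v w := by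
    intro u v w huv hvw hwp
    have hvp : v ≤ p := le_of_lt (lt_of_lt_of_le hvw hwp)
    have d1 : (0:ℝ) < ((U v).card : ℝ) - ((U u).card : ℝ) := sub_pos.2 (hn u v huv hvp)
    have d2 : (0:ℝ) < ((U w).card : ℝ) - ((U v).card : ℝ) := sub_pos.2 (hn v w hvw hwp)
    have h := hstep u v w huv hvw hwp
    rw [hf u v, hf v w] at h
    have := (hmed _ _ _ _ d1 d2 h).2
    rw [hmidf u v w huv hvw hwp, hf v w]
    exact this
  have H1 : f a b ≤ f a b' := by
    rcases eq_or_lt_of_le hbb' with h | h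
    · rw [h]
    · exact mono_right a b b' hab h hb'p
  have H2 : f a b' ≤ f a' b' := by
    rcases eq_or_lt_of_le haa' with h | h
    · rw [h]
    · exact mono_left a a' b' h hab' hb'p
  linarith
end

section
/- (Proposition 5.) Let T be a finite set of time series, x ∈ T, let U be a regularized band with U ≠ T, and let V be the adjacent regularized band, i.e. the smallest regularized band strictly containing U. Define g(X) = (Score₁(X) − Score₁(U)) / (|X| − |U|) for X ⊋ U. Then g(V) = min { g(X) : U ⊊ X ⊆ T }. -/
/-!
Let `m` be the least slope `g(X)` over `U ⊊ X ⊆ T`, attained at `X₀`. Since `U` minimizes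
`Reg(·;α₀)`, every slope is at least `α₀`, so `α₀ ≤ m`. The score is submodular on sets sharing
`x`, hence so is `Reg(·;m)`; comparing `Y` with `Y ∪ U` (a superset, where the choice of `m`
applies) and `Y ∩ U` (no larger than `U`, where `α₀ ≤ m` applies) shows that `U` still minimizes
`Reg(·;m)`. Minimizers are closed under union, so the band `W` for `m` contains every minimizer,
in particular `X₀`; thus `U ⊊ W` and adjacency gives `V ⊆ W`. Finally `V` minimizes `Reg(·;α₁)`
and `|U| ≤ |V| ≤ |W|`, so `Reg(V;m) ≤ max (Reg(U;m)) (Reg(W;m)) = Reg(U;m)`, which is `g(V) ≤ m`.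
-/

open Finset
open scoped Classical

section SupInf

variable {α : Type*} [ConditionallyCompleteLinearOrder α] [AddCommMonoid α]
  [IsOrderedAddMonoid α] {S S' I : Set α}

theorem csSup_union_add_csSup_le (hS : BddAbove S) (hS' : BddAbove S') (hI : I.Nonempty)
    (hIS : I ⊆ S) (hIS' : I ⊆ S') : sSup (S ∪ S') + sSup I ≤ sSup S + sSup S' := by
  rw [csSup_union hS (hI.mono hIS) hS' (hI.mono hIS'), ← max_add_min (sSup S)]
  exact add_le_add le_rfl (le_min (csSup_le_csSup hS hI hIS) (csSup_le_csSup hS' hI hIS'))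

theorem csInf_add_csInf_le_csInf_union_add (hS : BddBelow S) (hS' : BddBelow S')
    (hI : I.Nonempty) (hIS : I ⊆ S) (hIS' : I ⊆ S') :
    sInf S + sInf S' ≤ sInf (S ∪ S') + sInf I := by
  rw [csInf_union hS (hI.mono hIS) hS' (hI.mono hIS'), ← min_add_max (sInf S)]
  exact add_le_add le_rfl (max_le (csInf_le_csInf hS hI hIS) (csInf_le_csInf hS' hI hIS'))

end SupInf

section RegBand

variable {D : Type*} [Fintype D] {T A B U V W X Y Z : Finset (D → ℝ)} {x : D → ℝ} {α β : ℝ}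

theorem score1_union_add_score1_inter_le (h : (A ∩ B).Nonempty) :
    score1 (A ∪ B) + score1 (A ∩ B) ≤ score1 A + score1 B := by
  unfold score1
  rw [← sum_add_distrib, ← sum_add_distrib]
  refine sum_le_sum fun i _ => ?_
  set ev : (D → ℝ) → ℝ := fun f => f i
  have hfin (C : Finset (D → ℝ)) : (ev '' C).Finite := C.finite_toSet.image ev
  have hI : (ev '' ↑(A ∩ B)).Nonempty := (coe_nonempty.2 h).image ev
  have hIA : ev '' ↑(A ∩ B) ⊆ ev '' A := Set.image_mono (coe_subset.2 inter_subset_left)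
  have hIB : ev '' ↑(A ∩ B) ⊆ ev '' B := Set.image_mono (coe_subset.2 inter_subset_right)
  have hsup := csSup_union_add_csSup_le (hfin A).bddAbove (hfin B).bddAbove hI hIA hIB
  have hinf := csInf_add_csInf_le_csInf_union_add (hfin A).bddBelow (hfin B).bddBelow hI hIA hIB
  rw [← Set.image_union, ← coe_union] at hsup hinf
  linarith

theorem reg_union_add_reg_inter_le (α : ℝ) (h : (A ∩ B).Nonempty) :
    reg α (A ∪ B) + reg α (A ∩ B) ≤ reg α A + reg α B := by
  have hcard : ((A ∪ B).card : ℝ) + (A ∩ B).card = A.card + B.card := by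
    exact_mod_cast card_union_add_card_inter A B
  unfold reg
  linear_combination score1_union_add_score1_inter_le h - α * hcard

noncomputable def scoreSlope (U X : Finset (D → ℝ)) : ℝ :=
  (score1 X - score1 U) / ((X.card : ℝ) - (U.card : ℝ))

theorem le_scoreSlope_iff (h : U ⊂ X) : β ≤ scoreSlope U X ↔ reg β U ≤ reg β X := by
  have hcard : (0 : ℝ) < (X.card : ℝ) - U.card := sub_pos.2 (by exact_mod_cast card_lt_card h)
  rw [scoreSlope, le_div_iff₀ hcard, reg, reg]
  constructor <;> intro h <;> linarith

theorem scoreSlope_le_iff (h : U ⊂ X) : scoreSlope U X ≤ β ↔ reg β X ≤ reg β U := by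
  have hcard : (0 : ℝ) < (X.card : ℝ) - U.card := sub_pos.2 (by exact_mod_cast card_lt_card h)
  rw [scoreSlope, div_le_iff₀ hcard, reg, reg]
  constructor <;> intro h <;> linarith

theorem exists_scoreSlope_min (hUV : U ⊂ V) (hVT : V ⊆ T) :
    ∃ X₀, U ⊂ X₀ ∧ X₀ ⊆ T ∧ ∀ X, U ⊂ X → X ⊆ T → scoreSlope U X₀ ≤ scoreSlope U X := by
  obtain ⟨X₀, hX₀, hmin⟩ := (T.powerset.filter (U ⊂ ·)).exists_min_image (scoreSlope U)
    ⟨V, by simpa using ⟨hVT, hUV⟩⟩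
  simp only [mem_filter, mem_powerset] at hX₀ hmin
  exact ⟨X₀, hX₀.2, hX₀.1, fun X hUX hXT => hmin X ⟨hXT, hUX⟩⟩

theorem exists_isRegBand (hx : x ∈ T) (α : ℝ) : ∃ W, IsRegBand T x α W := by
  set S := T.powerset.filter (x ∈ ·)
  have mem_S {Y : Finset (D → ℝ)} : Y ∈ S ↔ Y ⊆ T ∧ x ∈ Y := by simp [S]
  obtain ⟨U, hUS, hUmin⟩ :=
    S.exists_min_image (reg α) ⟨{x}, mem_S.2 ⟨singleton_subset_iff.2 hx, mem_singleton_self x⟩⟩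
  obtain ⟨W, hWM, hWmax⟩ :=
    (S.filter (reg α · = reg α U)).exists_max_image card ⟨U, mem_filter.2 ⟨hUS, rfl⟩⟩
  obtain ⟨hWS, hWU⟩ := mem_filter.1 hWM
  refine ⟨W, (mem_S.1 hWS).1, (mem_S.1 hWS).2, fun Y hYT hxY => ?_, fun Y hYT hxY hY => ?_⟩
  · exact hWU ▸ hUmin Y (mem_S.2 ⟨hYT, hxY⟩)
  · exact hWmax Y (mem_filter.2 ⟨mem_S.2 ⟨hYT, hxY⟩, hY.trans hWU⟩)

namespace IsRegBand

theorem subset_of_reg_eq (hW : IsRegBand T x α W) (hYT : Y ⊆ T) (hxY : x ∈ Y)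
    (hY : reg α Y = reg α W) : Y ⊆ W := by
  obtain ⟨hWT, hxW, hmin, hmax⟩ := hW
  have hxI : x ∈ Y ∩ W := mem_inter.2 ⟨hxY, hxW⟩
  have hYWT : Y ∪ W ⊆ T := union_subset hYT hWT
  have hxYW : x ∈ Y ∪ W := mem_union_right _ hxW
  have hunion : reg α (Y ∪ W) = reg α W := by
    linarith [reg_union_add_reg_inter_le α ⟨x, hxI⟩, hmin _ hYWT hxYW,
      hmin _ (inter_subset_left.trans hYT) hxI]
  have hWeq : W = Y ∪ W := eq_of_subset_of_card_le subset_union_right (hmax _ hYWT hxYW hunion)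
  exact union_eq_right.1 hWeq.symm

theorem reg_le_of_le_of_card_le (hU : IsRegBand T x α U) (hαβ : α ≤ β) (hZT : Z ⊆ T)
    (hxZ : x ∈ Z) (hcard : Z.card ≤ U.card) : reg β U ≤ reg β Z := by
  have hreg := hU.2.2.1 Z hZT hxZ
  have hcard' : (Z.card : ℝ) ≤ U.card := by exact_mod_cast hcard
  unfold reg at *
  nlinarith

theorem reg_le_of_le_of_card_ge (hU : IsRegBand T x α U) (hβα : β ≤ α) (hZT : Z ⊆ T)
    (hxZ : x ∈ Z) (hcard : U.card ≤ Z.card) : reg β U ≤ reg β Z := by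
  have hreg := hU.2.2.1 Z hZT hxZ
  have hcard' : (U.card : ℝ) ≤ Z.card := by exact_mod_cast hcard
  unfold reg at *
  nlinarith

theorem reg_le_max (hV : IsRegBand T x α V) (β : ℝ) (hUT : U ⊆ T) (hxU : x ∈ U)
    (hWT : W ⊆ T) (hxW : x ∈ W) (hUV : U.card ≤ V.card) (hVW : V.card ≤ W.card) :
    reg β V ≤ max (reg β U) (reg β W) := by
  rcases le_total α β with hαβ | hβα
  · exact le_max_of_le_left (hV.reg_le_of_le_of_card_le hαβ hUT hxU hUV)
  · exact le_max_of_le_right (hV.reg_le_of_le_of_card_ge hβα hWT hxW hVW)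

theorem reg_le_of_forall_ssuperset (hU : IsRegBand T x α U) (hαβ : α ≤ β)
    (hsup : ∀ X, U ⊂ X → X ⊆ T → reg β U ≤ reg β X) (hYT : Y ⊆ T) (hxY : x ∈ Y) :
    reg β U ≤ reg β Y := by
  have hxI : x ∈ Y ∩ U := mem_inter.2 ⟨hxY, hU.2.1⟩
  have hunion : reg β U ≤ reg β (Y ∪ U) := by
    rcases (subset_union_right : U ⊆ Y ∪ U).eq_or_ssubset with h | h
    · rw [← h]
    · exact hsup _ h (union_subset hYT hU.1)
  have hinter : reg β U ≤ reg β (Y ∩ U) :=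
    hU.reg_le_of_le_of_card_le hαβ (inter_subset_right.trans hU.1) hxI
      (card_le_card inter_subset_right)
  linarith [reg_union_add_reg_inter_le β ⟨x, hxI⟩]

end IsRegBand

end RegBand

theorem regband_sparsest_general {D : Type*} [Fintype D]
    (T : Finset (D → ℝ)) (x : D → ℝ) (hx : x ∈ T)
    (U V : Finset (D → ℝ))
    (hU : ∃ α : ℝ, 0 < α ∧ IsRegBand T x α U)
    (hV : ∃ α : ℝ, 0 < α ∧ IsRegBand T x α V) (hUV : U ⊂ V)
    (hVadj : ∀ W : Finset (D → ℝ), (∃ α : ℝ, 0 < α ∧ IsRegBand T x α W) → U ⊂ W → V ⊆ W) :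
    IsLeast
      {r : ℝ | ∃ X : Finset (D → ℝ), U ⊂ X ∧ X ⊆ T ∧
        r = (score1 X - score1 U) / ((X.card : ℝ) - (U.card : ℝ))}
      ((score1 V - score1 U) / ((V.card : ℝ) - (U.card : ℝ))) := by
  obtain ⟨α₀, hα₀, hUband⟩ := hU
  obtain ⟨α₁, -, hVband⟩ := hV
  have ⟨hUT, hxU, hUmin₀, _⟩ := hUband
  obtain ⟨X₀, hUX₀, hX₀T, hX₀min⟩ := exists_scoreSlope_min hUV hVband.1
  have hxX₀ : x ∈ X₀ := hUX₀.subset hxU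
  set m := scoreSlope U X₀
  have hα₀m : α₀ ≤ m := (le_scoreSlope_iff hUX₀).2 (hUmin₀ X₀ hX₀T hxX₀)
  have hUmin {Y} : Y ⊆ T → x ∈ Y → reg m U ≤ reg m Y :=
    hUband.reg_le_of_forall_ssuperset hα₀m fun X hUX hXT =>
      (le_scoreSlope_iff hUX).1 (hX₀min X hUX hXT)
  obtain ⟨W, hWband⟩ := exists_isRegBand hx m
  have ⟨hWT, hxW, hWmin, _⟩ := hWband
  have hWU : reg m W = reg m U := le_antisymm (hWmin U hUT hxU) (hUmin hWT hxW)
  have hX₀U : reg m X₀ = reg m U :=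
    le_antisymm ((scoreSlope_le_iff hUX₀).1 le_rfl) (hUmin hX₀T hxX₀)
  have hUW : U ⊂ W := hUX₀.trans_subset (hWband.subset_of_reg_eq hX₀T hxX₀ (hX₀U.trans hWU.symm))
  have hVW : V ⊆ W := hVadj W ⟨m, hα₀.trans_le hα₀m, hWband⟩ hUW
  have hVm : reg m V ≤ reg m U := by
    simpa only [hWU, max_self] using hVband.reg_le_max m hUT hxU hWT hxW
      (card_le_card hUV.subset) (card_le_card hVW)
  refine ⟨⟨V, hUV, hVband.1, rfl⟩, ?_⟩
  rintro _ ⟨X, hUX, hXT, rfl⟩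
  exact ((scoreSlope_le_iff hUV).2 hVm).trans (hX₀min X hUX hXT)

/-- Proposition 5: let `U` be a regularized band of `T` (seed `x ∈ T`) with `U ≠ T`, and let
`V` be the adjacent regularized band, i.e. the smallest regularized band strictly
containing `U`. With `g X = (Score₁(X) − Score₁(U)) / (|X| − |U|)` for `X ⊋ U`, the value
`g V` is the minimum of `g X` over all `X` with `U ⊊ X ⊆ T`. -/
theorem regband_sparsest {D : Type*} [Fintype D] [Nonempty D]
    (T : Finset (D → ℝ)) (x : D → ℝ) (hx : x ∈ T)
    (U V : Finset (D → ℝ))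
    (hU : ∃ α : ℝ, 0 < α ∧ IsRegBand T x α U) (hUT : U ≠ T)
    (hV : ∃ α : ℝ, 0 < α ∧ IsRegBand T x α V) (hUV : U ⊂ V)
    (hVadj : ∀ W : Finset (D → ℝ), (∃ α : ℝ, 0 < α ∧ IsRegBand T x α W) → U ⊂ W → V ⊆ W) :
    IsLeast
      {r : ℝ | ∃ X : Finset (D → ℝ), U ⊂ X ∧ X ⊆ T ∧
        r = (score1 X - score1 U) / ((X.card : ℝ) - (U.card : ℝ))}
      ((score1 V - score1 U) / ((V.card : ℝ) - (U.card : ℝ))) :=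
  regband_sparsest_general T x hx U V hU hV hUV hVadj
end

section
/- Let T be a finite set of time series, x ∈ T, B ⊆ T a nonempty subset with x ∈ B, and C ⊆ T a finite subset. Then Score₁(B ∪ C) ≤ Score₁(B) + ∑_{c ∈ C} Score₁({x, c}). -/
/-! Fix a point `i` of the domain and compare everything with `x i`: each `c ∈ C` can raise
the maximum over `B` by at most `(c i - x i)⁺` and lower the minimum by at most
`(c i - x i)⁻`, and these two add up to `|c i - x i| = Score₁({x, c})` at `i`. -/

open Finset
open scoped Classical

section EnvelopeWidth

variable {ι : Type*} {S : Set ℝ} {a : ℝ} (C : Finset ι) (g : ι → ℝ)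

lemma csSup_union_image_le_add_sum_posPart (hS : BddAbove S) (ha : a ∈ S) :
    sSup (S ∪ g '' C) ≤ sSup S + ∑ c ∈ C, (g c - a)⁺ := by
  have hsum : ∀ c ∈ C, 0 ≤ (g c - a)⁺ := fun c _ => posPart_nonneg _
  refine csSup_le ⟨a, .inl ha⟩ ?_
  rintro y (hy | ⟨c, hc, rfl⟩)
  · exact le_add_of_le_of_nonneg (le_csSup hS hy) (sum_nonneg hsum)
  · calc g c ≤ a + (g c - a)⁺ := by linarith [le_posPart (g c - a)]
      _ ≤ sSup S + ∑ c ∈ C, (g c - a)⁺ :=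
        add_le_add (le_csSup hS ha) (single_le_sum hsum (Finset.mem_coe.mp hc))

lemma sInf_sub_sum_negPart_le_csInf_union_image (hS : BddBelow S) (ha : a ∈ S) :
    sInf S - ∑ c ∈ C, (g c - a)⁻ ≤ sInf (S ∪ g '' C) := by
  have hsum : ∀ c ∈ C, 0 ≤ (g c - a)⁻ := fun c _ => negPart_nonneg _
  refine le_csInf ⟨a, .inl ha⟩ ?_
  rintro y (hy | ⟨c, hc, rfl⟩)
  · exact sub_le_iff_le_add.mpr (le_add_of_le_of_nonneg (csInf_le hS hy) (sum_nonneg hsum))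
  · calc sInf S - ∑ c ∈ C, (g c - a)⁻ ≤ a - (g c - a)⁻ :=
          sub_le_sub (csInf_le hS ha) (single_le_sum hsum (Finset.mem_coe.mp hc))
      _ ≤ g c := by linarith [neg_le_negPart (g c - a)]

lemma width_union_image_le (hS : S.Finite) (ha : a ∈ S) :
    sSup (S ∪ g '' C) - sInf (S ∪ g '' C) ≤ (sSup S - sInf S) + ∑ c ∈ C, |g c - a| := by
  have hsup := csSup_union_image_le_add_sum_posPart C g hS.bddAbove ha
  have hinf := sInf_sub_sum_negPart_le_csInf_union_image C g hS.bddBelow ha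
  have hsplit : ∑ c ∈ C, |g c - a| = ∑ c ∈ C, (g c - a)⁺ + ∑ c ∈ C, (g c - a)⁻ := by
    rw [← sum_add_distrib]
    exact sum_congr rfl fun c _ => (posPart_add_negPart _).symm
  linarith

end EnvelopeWidth

lemma score1_pair {D : Type*} [Fintype D] (x c : D → ℝ) :
    score1 ({x, c} : Finset (D → ℝ)) = ∑ i : D, |c i - x i| := by
  refine sum_congr rfl fun i _ => ?_
  rw [coe_pair, Set.image_pair, csSup_pair, csInf_pair, max_sub_min_eq_abs]

theorem score1_union_le_general {D : Type*} [Fintype D]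
    (B C : Finset (D → ℝ)) (x : D → ℝ)
    (hxB : x ∈ B) :
    score1 (B ∪ C) ≤ score1 B + ∑ c ∈ C, score1 ({x, c} : Finset (D → ℝ)) := by
  simp only [score1_pair]
  rw [sum_comm, score1, score1, ← sum_add_distrib]
  refine sum_le_sum fun i _ => ?_
  rw [coe_union, Set.image_union]
  exact width_union_image_le C (fun c => c i) (B.finite_toSet.image _) ⟨x, hxB, rfl⟩

/-- For `B ⊆ T` nonempty with `x ∈ B` and `C ⊆ T`,
`Score₁(B ∪ C) ≤ Score₁(B) + ∑_{c ∈ C} Score₁({x, c})`. -/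
theorem score1_union_le {D : Type*} [Fintype D] [Nonempty D]
    (T B C : Finset (D → ℝ)) (x : D → ℝ)
    (hx : x ∈ T) (hBT : B ⊆ T) (hCT : C ⊆ T) (hxB : x ∈ B) :
    score1 (B ∪ C) ≤ score1 B + ∑ c ∈ C, score1 ({x, c} : Finset (D → ℝ)) :=
  score1_union_le_general B C x hxB
end

section
/- Let T be a finite set of n time series, x ∈ T, and k an integer with 1 ≤ k ≤ n. Let r = min { Score₁(O) : O ⊆ T, x ∈ O, |O| = k }. Then for every B ⊆ T with x ∈ B and |B| ≤ k, there exists U ⊆ T with B ⊆ U, x ∈ U, |U| = k, and Score₁(U) ≤ Score₁(B) + (k − |B|) · r. -/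
open Finset
open scoped Classical

lemma score1_eq {D : Type*} [Fintype D] (U : Finset (D → ℝ)) (hU : U.Nonempty) :
    score1 U = ∑ i : D, ((U.image (fun f => f i)).max' (hU.image _) -
      (U.image (fun f => f i)).min' (hU.image _)) := by
  unfold score1
  refine Finset.sum_congr rfl fun i _ => ?_
  have h : (fun f => f i) '' (U : Set (D → ℝ)) = ↑(U.image (fun f => f i)) := by
    simp [Finset.coe_image]
  rw [h, (hU.image _).csSup_eq_max', (hU.image _).csInf_eq_min']

lemma score1_insert_le {D : Type*} [Fintype D] {B O : Finset (D → ℝ)} {x t : D → ℝ}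
    (hxB : x ∈ B) (hxO : x ∈ O) (htO : t ∈ O) :
    score1 (insert t B) ≤ score1 B + score1 O := by
  have hB : B.Nonempty := ⟨x, hxB⟩
  have hO : O.Nonempty := ⟨x, hxO⟩
  have hB' : (insert t B).Nonempty := ⟨x, Finset.mem_insert_of_mem hxB⟩
  rw [score1_eq B hB, score1_eq O hO, score1_eq _ hB', ← Finset.sum_add_distrib]
  refine Finset.sum_le_sum fun i _ => ?_
  have himg : (insert t B).image (fun f => f i) = insert (t i) (B.image (fun f => f i)) :=
    Finset.image_insert _ _ _
  set M := (B.image (fun f => f i)).max' (hB.image _) with hM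
  set m := (B.image (fun f => f i)).min' (hB.image _) with hm
  set SO := (O.image (fun f => f i)).max' (hO.image _) with hSO
  set sO := (O.image (fun f => f i)).min' (hO.image _) with hsO
  have hxM : x i ≤ M := by
    rw [hM]; exact Finset.le_max' _ _ (Finset.mem_image_of_mem (fun f => f i) hxB)
  have hmx : m ≤ x i := by
    rw [hm]; exact Finset.min'_le _ _ (Finset.mem_image_of_mem (fun f => f i) hxB)
  have hxSO : x i ≤ SO := by
    rw [hSO]; exact Finset.le_max' _ _ (Finset.mem_image_of_mem (fun f => f i) hxO)
  have hsOx : sO ≤ x i := by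
    rw [hsO]; exact Finset.min'_le _ _ (Finset.mem_image_of_mem (fun f => f i) hxO)
  have htSO : t i ≤ SO := by
    rw [hSO]; exact Finset.le_max' _ _ (Finset.mem_image_of_mem (fun f => f i) htO)
  have hsOt : sO ≤ t i := by
    rw [hsO]; exact Finset.min'_le _ _ (Finset.mem_image_of_mem (fun f => f i) htO)
  have hsub : B.image (fun f => f i) ⊆ (insert t B).image (fun f => f i) :=
    Finset.image_subset_image (Finset.subset_insert _ _)
  have htmem : t i ∈ (insert t B).image (fun f => f i) :=
    Finset.mem_image_of_mem _ (Finset.mem_insert_self _ _)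
  have hmax : ((insert t B).image (fun f => f i)).max' (hB'.image _) = max M (t i) := by
    refine le_antisymm (Finset.max'_le _ _ _ fun y hy => ?_)
      (max_le (hM ▸ Finset.max'_subset _ hsub) (Finset.le_max' _ _ htmem))
    rw [himg, Finset.mem_insert] at hy
    rcases hy with h | h
    · exact h ▸ le_max_right _ _
    · exact le_trans (Finset.le_max' _ _ h) (hM ▸ le_max_left _ _)
  have hmin : ((insert t B).image (fun f => f i)).min' (hB'.image _) = min m (t i) := by
    refine le_antisymm
      (le_min (hm ▸ Finset.min'_subset _ hsub) (Finset.min'_le _ _ htmem))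
      (Finset.le_min' _ _ _ fun y hy => ?_)
    rw [himg, Finset.mem_insert] at hy
    rcases hy with h | h
    · exact h ▸ min_le_right _ _
    · exact le_trans (hm ▸ min_le_left _ _) (Finset.min'_le _ _ h)
  rw [hmax, hmin]
  rcases le_total M (t i) with h1 | h1 <;> rcases le_total m (t i) with h2 | h2 <;>
    simp [max_eq_left, max_eq_right, min_eq_left, min_eq_right, h1, h2] <;> linarith

lemma greedy_aux {D : Type*} [Fintype D]
    (T : Finset (D → ℝ)) (x : D → ℝ)
    (k : ℕ) (r : ℝ)
    (O : Finset (D → ℝ)) (hOT : O ⊆ T) (hxO : x ∈ O) (hOk : O.card = k)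
    (hrO : r = score1 O) :
    ∀ n : ℕ, ∀ B : Finset (D → ℝ), B ⊆ T → x ∈ B → B.card ≤ k → k - B.card = n →
    ∃ U : Finset (D → ℝ), B ⊆ U ∧ U ⊆ T ∧ x ∈ U ∧ U.card = k ∧
      score1 U ≤ score1 B + (n : ℝ) * r := by
  intro n
  induction n with
  | zero =>
      intro B hBT hxB hBk hn
      have hcard : B.card = k := le_antisymm hBk (Nat.le_of_sub_eq_zero hn)
      exact ⟨B, subset_rfl, hBT, hxB, hcard, by simp⟩
  | succ n ih =>
      intro B hBT hxB hBk hn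
      have hBlt : B.card < k := by omega
      have : (O \ B).Nonempty := by
        rw [Finset.sdiff_nonempty]
        intro h
        have := Finset.card_le_card h
        omega
      obtain ⟨t, ht⟩ := this
      have htO : t ∈ O := (Finset.mem_sdiff.mp ht).1
      have htB : t ∉ B := (Finset.mem_sdiff.mp ht).2
      have hcard' : (insert t B).card = B.card + 1 := Finset.card_insert_of_notMem htB
      obtain ⟨U, hBU, hUT, hxU, hUk, hUle⟩ := ih (insert t B)
        (Finset.insert_subset (hOT htO) hBT) (Finset.mem_insert_of_mem hxB)
        (by omega) (by omega)
      refine ⟨U, (Finset.subset_insert _ _).trans hBU, hUT, hxU, hUk, ?_⟩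
      have hstep : score1 (insert t B) ≤ score1 B + r := by
        rw [hrO]; exact score1_insert_le hxB hxO htO
      push_cast
      linarith

/-- Let `T` be a set of `n` time series, `x ∈ T`, `1 ≤ k ≤ n`, and let
`r = min { Score₁(O) : O ⊆ T, x ∈ O, |O| = k }`. Then every `B ⊆ T` with `x ∈ B` and
`|B| ≤ k` can be extended to some `U ⊇ B` with `x ∈ U`, `|U| = k`, and
`Score₁(U) ≤ Score₁(B) + (k − |B|)·r`. -/
theorem greedy_extension {D : Type*} [Fintype D] [Nonempty D]
    (T : Finset (D → ℝ)) (x : D → ℝ) (hx : x ∈ T)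
    (k : ℕ) (hk1 : 1 ≤ k) (hkn : k ≤ T.card)
    (r : ℝ)
    (hr : IsLeast {s : ℝ | ∃ O : Finset (D → ℝ), O ⊆ T ∧ x ∈ O ∧ O.card = k ∧ s = score1 O} r)
    (B : Finset (D → ℝ)) (hBT : B ⊆ T) (hxB : x ∈ B) (hBk : B.card ≤ k) :
    ∃ U : Finset (D → ℝ), B ⊆ U ∧ U ⊆ T ∧ x ∈ U ∧ U.card = k ∧
      score1 U ≤ score1 B + ((k : ℝ) - (B.card : ℝ)) * r := by
  obtain ⟨O, hOT, hxO, hOk, hrO⟩ := hr.1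
  obtain ⟨U, h1, h2, h3, h4, h5⟩ :=
    greedy_aux T x k r O hOT hxO hOk hrO (k - B.card) B hBT hxB hBk rfl
  refine ⟨U, h1, h2, h3, h4, ?_⟩
  have : ((k - B.card : ℕ) : ℝ) = (k : ℝ) - (B.card : ℝ) := by
    push_cast [Nat.cast_sub hBk]; ring
  rwa [this] at h5
end

section
/- (Core of the k-MinUnion reduction.) Let D be a finite set and S₁, …, S_n ⊆ D. Define time series t₁, …, t_n : D → ℝ by t_j(i) = 1 if i ∈ S_j and t_j(i) = 0 otherwise, and let x : D → ℝ be the zero time series. Then for every index set I ⊆ {1, …, n}, the band U = {x} ∪ {t_j : j ∈ I} satisfies Score₁(U) = |⋃_{j ∈ I} S_j|. -/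
open Finset
open scoped Classical

/-- Core of the k-MinUnion reduction: given sets `S₁, …, S_n ⊆ D`, define time series
`t_j` as the indicator function of `S_j`, and let `x = 0`. Then for every index set `I`,
the band `U = {x} ∪ {t_j : j ∈ I}` satisfies `Score₁(U) = |⋃_{j ∈ I} S_j|`. -/
theorem minunion_reduction {D : Type*} [Fintype D] [Nonempty D] [DecidableEq D]
    {n : ℕ} (S : Fin n → Finset D)
    (t : Fin n → D → ℝ)
    (ht : ∀ (j : Fin n) (i : D), t j i = if i ∈ S j then 1 else 0)
    (I : Finset (Fin n)) :
    score1 (insert (0 : D → ℝ) (I.image t)) = ((I.biUnion S).card : ℝ) := by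
  classical
  set U : Finset (D → ℝ) := insert (0 : D → ℝ) (I.image t) with hU
  have hmem : ∀ i : D, ∀ y ∈ ((fun f => f i) '' (U : Set (D → ℝ))), y = 0 ∨ y = 1 := by
    rintro i y ⟨f, hf, rfl⟩
    simp only [hU, coe_insert, Set.mem_insert_iff, coe_image, Set.mem_image, mem_coe] at hf
    rcases hf with rfl | ⟨j, hj, rfl⟩
    · left; rfl
    · simp only [ht]
      by_cases h : i ∈ S j <;> simp [h]
  have h0 : ∀ i : D, (0 : ℝ) ∈ ((fun f => f i) '' (U : Set (D → ℝ))) := by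
    intro i
    exact ⟨0, by simp [hU], rfl⟩
  have hfin : ∀ i : D, ((fun f => f i) '' (U : Set (D → ℝ))).Finite := by
    intro i; exact (U.finite_toSet).image _
  have hInf : ∀ i : D, sInf ((fun f => f i) '' (U : Set (D → ℝ))) = 0 := by
    intro i
    apply le_antisymm
    · exact csInf_le ((hfin i).bddBelow) (h0 i)
    · apply le_csInf ⟨0, h0 i⟩
      intro y hy
      rcases hmem i y hy with rfl | rfl
      · exact le_rfl
      · norm_num
  have hSup : ∀ i : D, sSup ((fun f => f i) '' (U : Set (D → ℝ)))
      = if i ∈ I.biUnion S then (1 : ℝ) else 0 := by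
    intro i
    by_cases h : i ∈ I.biUnion S
    · simp only [h, if_true]
      rcases Finset.mem_biUnion.mp h with ⟨j, hj, hij⟩
      apply le_antisymm
      · apply csSup_le ⟨0, h0 i⟩
        intro y hy
        rcases hmem i y hy with rfl | rfl
        · norm_num
        · exact le_rfl
      · apply le_csSup ((hfin i).bddAbove)
        refine ⟨t j, ?_, by simp [ht, hij]⟩
        simp only [hU, coe_insert, Set.mem_insert_iff, coe_image, Set.mem_image, mem_coe]
        exact Or.inr ⟨j, hj, rfl⟩
    · simp only [h, if_false]
      apply le_antisymm
      · apply csSup_le ⟨0, h0 i⟩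
        intro y hy
        rcases hy with ⟨f, hf, rfl⟩
        simp only [hU, coe_insert, Set.mem_insert_iff, coe_image, Set.mem_image, mem_coe] at hf
        rcases hf with rfl | ⟨j, hj, rfl⟩
        · exact le_refl 0
        · simp only [ht]
          have : i ∉ S j := fun hc => h (Finset.mem_biUnion.mpr ⟨j, hj, hc⟩)
          simp [this]
      · exact le_csSup ((hfin i).bddAbove) (h0 i)
  unfold score1
  rw [Finset.sum_congr rfl (fun i _ => by rw [hInf i, hSup i, sub_zero])]
  rw [Finset.sum_ite_mem]
  simp
end

section
/- (FindInf is a 2-approximation.) Let T be a finite set of n time series, x ∈ T, and k an integer with 1 ≤ k ≤ n. Suppose V ⊆ T with x ∈ V and |V| = k consists of the k time series nearest to x in the sup norm, i.e. for every t ∈ V and every u ∈ T \ V, max_{i∈D} |t(i) − x(i)| ≤ max_{i∈D} |u(i) − x(i)|. Then Score∞(V) ≤ 2 · min { Score∞(U) : U ⊆ T, x ∈ U, |U| = k }. -/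
open Finset
open scoped Classical

/-- The envelope-width score of a finite set `U` of time series over a finite domain `D`:
`Score∞(U) = max_{i ∈ D} (max_{t ∈ U} t(i) − min_{t ∈ U} t(i))`. -/
noncomputable def scoreInf {D : Type*} [Fintype D] (U : Finset (D → ℝ)) : ℝ :=
  ⨆ i : D, (sSup ((fun f => f i) '' (U : Set (D → ℝ))) -
            sInf ((fun f => f i) '' (U : Set (D → ℝ))))

lemma pair_le_scoreInf {D : Type*} [Fintype D] (U : Finset (D → ℝ))
    {f g : D → ℝ} (hf : f ∈ U) (hg : g ∈ U) (i : D) :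
    |f i - g i| ≤ scoreInf U := by
  have hA : BddAbove ((fun f => f i) '' (U : Set (D → ℝ))) :=
    (U.finite_toSet.image _).bddAbove
  have hB : BddBelow ((fun f => f i) '' (U : Set (D → ℝ))) :=
    (U.finite_toSet.image _).bddBelow
  have h1 : sSup ((fun f => f i) '' (U : Set (D → ℝ))) -
      sInf ((fun f => f i) '' (U : Set (D → ℝ))) ≤ scoreInf U := by
    exact le_ciSup (f := fun i : D => sSup ((fun f => f i) '' (U : Set (D → ℝ))) -
      sInf ((fun f => f i) '' (U : Set (D → ℝ)))) (Set.Finite.bddAbove (Set.finite_range _)) i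
  have habs : |f i - g i| ≤ sSup ((fun f => f i) '' (U : Set (D → ℝ))) -
      sInf ((fun f => f i) '' (U : Set (D → ℝ))) := by
    rcases abs_cases (f i - g i) with ⟨h, _⟩ | ⟨h, _⟩ <;> rw [h] <;>
      [skip; rw [neg_sub]] <;>
      exact sub_le_sub (le_csSup hA (by exact ⟨_, by simp [hf, hg], rfl⟩))
        (csInf_le hB (by exact ⟨_, by simp [hf, hg], rfl⟩))
  linarith

/-- FindInf is a 2-approximation: if `V ⊆ T` with `x ∈ V` and `|V| = k` consists of the `k`
time series of `T` nearest to `x` in the sup norm, then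
`Score∞(V) ≤ 2 · min { Score∞(U) : U ⊆ T, x ∈ U, |U| = k }`. -/
theorem findinf_two_approx {D : Type*} [Fintype D] [Nonempty D]
    (T : Finset (D → ℝ)) (x : D → ℝ) (hx : x ∈ T)
    (k : ℕ) (hk1 : 1 ≤ k) (hkn : k ≤ T.card)
    (V : Finset (D → ℝ)) (hVT : V ⊆ T) (hxV : x ∈ V) (hVk : V.card = k)
    (hnear : ∀ t ∈ V, ∀ u ∈ T, u ∉ V →
      (⨆ i : D, |t i - x i|) ≤ ⨆ i : D, |u i - x i|) :
    ∀ U : Finset (D → ℝ), U ⊆ T → x ∈ U → U.card = k →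
      scoreInf V ≤ 2 * scoreInf U := by
  intro U hUT hxU hUk
  set S := scoreInf U with hS
  have hS0 : 0 ≤ S := by
    have := pair_le_scoreInf U hxU hxU (Classical.arbitrary D)
    simpa using (abs_nonneg _).trans this
  -- every t ∈ V satisfies |t i - x i| ≤ S for all i
  have hbound : ∀ t ∈ V, ∀ i, |t i - x i| ≤ S := by
    intro t ht i
    by_cases htU : t ∈ U
    · exact pair_le_scoreInf U htU hxU i
    · -- there exists u ∈ U \ V
      have hne : ∃ u ∈ U, u ∉ V := by
        by_contra h
        push_neg at h
        have hsub : U ⊆ V := h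
        have : U = V := Finset.eq_of_subset_of_card_le hsub (by omega)
        exact htU (this ▸ ht)
      obtain ⟨u, huU, huV⟩ := hne
      have h1 : (⨆ i : D, |t i - x i|) ≤ ⨆ i : D, |u i - x i| :=
        hnear t ht u (hUT huU) huV
      have h2 : (⨆ i : D, |u i - x i|) ≤ S :=
        ciSup_le fun j => pair_le_scoreInf U huU hxU j
      have h3 : |t i - x i| ≤ ⨆ i : D, |t i - x i| :=
        le_ciSup (f := fun j : D => |t j - x j|) (Set.Finite.bddAbove (Set.finite_range _)) i
      linarith
  -- now bound scoreInf V
  have : scoreInf V ≤ 2 * S := by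
    apply ciSup_le
    intro i
    have hA : BddAbove ((fun f => f i) '' (V : Set (D → ℝ))) :=
      (V.finite_toSet.image _).bddAbove
    have hB : BddBelow ((fun f => f i) '' (V : Set (D → ℝ))) :=
      (V.finite_toSet.image _).bddBelow
    have hsup : sSup ((fun f => f i) '' (V : Set (D → ℝ))) ≤ x i + S := by
      refine csSup_le ⟨x i, x, by simp [hxV], rfl⟩ ?_
      rintro a ⟨t, ht, rfl⟩
      have := hbound t (by simpa using ht) i
      have := abs_le.mp this
      linarith [this.2]
    have hinf : x i - S ≤ sInf ((fun f => f i) '' (V : Set (D → ℝ))) := by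
      refine le_csInf ⟨x i, x, by simp [hxV], rfl⟩ ?_
      rintro a ⟨t, ht, rfl⟩
      have := hbound t (by simpa using ht) i
      have := abs_le.mp this
      linarith [this.1]
    linarith
  exact this
end

section
/- (Core of the hardness reduction for InfBand.) Let G be a simple graph on vertex set {v₁, …, v_n} with edge set E, such that no vertex is adjacent to all other vertices and n ≥ 2. Let F = { (v_a, v_b) : a < b, {v_a, v_b} ∉ E } be the set of non-edges, which is nonempty. For each i define t_i : F → ℝ by t_i((v_a, v_b)) = 1 if i = a, t_i((v_a, v_b)) = −1 if i = b, and 0 otherwise, and let x : F → ℝ be the zero time series. Then for every nonempty W ⊆ {v₁, …, v_n}, the band U = {x} ∪ {t_i : v_i ∈ W} satisfies Score∞(U) ∈ {1, 2}, and Score∞(U) = 1 if and only if W is a clique in G. -/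
open Finset
open scoped Classical

/-- The non-edges of a graph `G` on `Fin n`: pairs `(v_a, v_b)` with `a < b` that are not
edges of `G`. -/
abbrev NonEdge {n : ℕ} (G : SimpleGraph (Fin n)) : Type :=
  {e : Fin n × Fin n // e.1 < e.2 ∧ ¬ G.Adj e.1 e.2}

/-- Core of the hardness reduction for InfBand: let `G` be a simple graph on `n ≥ 2`
vertices such that no vertex is adjacent to all other vertices, let `F` be the set of
non-edges of `G` (which is nonempty), and define time series `t_i : F → ℝ` by
`t_i((v_a,v_b)) = 1` if `i = a`, `−1` if `i = b`, and `0` otherwise; let `x = 0`.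
Then for every nonempty vertex set `W`, the band `U = {x} ∪ {t_i : v_i ∈ W}` satisfies
`Score∞(U) ∈ {1, 2}`, and `Score∞(U) = 1` if and only if `W` is a clique in `G`. -/
theorem infband_hardness_core {n : ℕ} (hn : 2 ≤ n)
    (G : SimpleGraph (Fin n))
    (hG : ∀ v : Fin n, ∃ u : Fin n, u ≠ v ∧ ¬ G.Adj v u)
    (t : Fin n → NonEdge G → ℝ)
    (ht : ∀ (i : Fin n) (e : NonEdge G),
      t i e = if i = e.val.1 then 1 else if i = e.val.2 then -1 else 0)
    (W : Finset (Fin n)) (hW : W.Nonempty) :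
    Nonempty (NonEdge G) ∧
    scoreInf (insert (0 : NonEdge G → ℝ) (W.image t)) ∈ ({1, 2} : Set ℝ) ∧
    (scoreInf (insert (0 : NonEdge G → ℝ) (W.image t)) = 1 ↔
      G.IsClique (W : Set (Fin n))) := by
  classical
  have v0 : Fin n := ⟨0, by omega⟩
  -- a helper making a non-edge containing a given vertex
  have mkNE : ∀ w : Fin n, ∃ e : NonEdge G, e.val.1 = w ∨ e.val.2 = w := by
    intro w
    obtain ⟨u, hune, huadj⟩ := hG w
    rcases lt_or_gt_of_ne hune with h | h
    · exact ⟨⟨(u, w), h, fun ha => huadj ha.symm⟩, Or.inr rfl⟩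
    · exact ⟨⟨(w, u), h, huadj⟩, Or.inl rfl⟩
  obtain ⟨w0, hw0⟩ := hW
  obtain ⟨e0, he0⟩ := mkNE w0
  have hne : Nonempty (NonEdge G) := ⟨e0⟩
  haveI := hne
  set U := insert (0 : NonEdge G → ℝ) (W.image t) with hU
  have hmem : ∀ (e : NonEdge G) (v : ℝ),
      v ∈ (fun f => f e) '' (U : Set (NonEdge G → ℝ)) ↔
      v = 0 ∨ (e.val.1 ∈ W ∧ v = 1) ∨ (e.val.2 ∈ W ∧ v = -1) := by
    intro e v
    constructor
    · rintro ⟨f, hf, rfl⟩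
      rw [hU] at hf
      simp only [coe_insert, Set.mem_insert_iff, coe_image, Set.mem_image] at hf
      rcases hf with rfl | ⟨i, hi, rfl⟩
      · left; rfl
      · simp only [ht]
        by_cases h1 : i = e.val.1
        · subst h1; right; left; exact ⟨hi, by simp⟩
        · by_cases h2 : i = e.val.2
          · subst h2; right; right; exact ⟨hi, by simp [h1]⟩
          · left; simp [h1, h2]
    · have hne12 : e.val.1 ≠ e.val.2 := ne_of_lt e.prop.1
      rintro (rfl | ⟨h, rfl⟩ | ⟨h, rfl⟩)
      · exact ⟨0, by simp [hU], rfl⟩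
      · refine ⟨t e.val.1, ?_, by simp only [ht]; simp⟩
        simp only [hU, coe_insert, Set.mem_insert_iff, coe_image, Set.mem_image]
        exact Or.inr ⟨e.val.1, h, rfl⟩
      · refine ⟨t e.val.2, ?_, by simp only [ht]; simp [hne12.symm, Ne.symm hne12]⟩
        simp only [hU, coe_insert, Set.mem_insert_iff, coe_image, Set.mem_image]
        exact Or.inr ⟨e.val.2, h, rfl⟩
  have hsup : ∀ e : NonEdge G, sSup ((fun f => f e) '' (U : Set (NonEdge G → ℝ)))
      = if e.val.1 ∈ W then 1 else 0 := by
    intro e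
    apply IsGreatest.csSup_eq
    constructor
    · rw [hmem]
      split_ifs with h
      · exact Or.inr (Or.inl ⟨h, rfl⟩)
      · exact Or.inl rfl
    · intro v hv
      rw [hmem] at hv
      rcases hv with rfl | ⟨h, rfl⟩ | ⟨h, rfl⟩ <;> split_ifs <;> norm_num
  have hinf : ∀ e : NonEdge G, sInf ((fun f => f e) '' (U : Set (NonEdge G → ℝ)))
      = if e.val.2 ∈ W then -1 else 0 := by
    intro e
    apply IsLeast.csInf_eq
    constructor
    · rw [hmem]
      split_ifs with h
      · exact Or.inr (Or.inr ⟨h, rfl⟩)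
      · exact Or.inl rfl
    · intro v hv
      rw [hmem] at hv
      rcases hv with rfl | ⟨h, rfl⟩ | ⟨h, rfl⟩ <;> split_ifs <;> norm_num
  have hscore : scoreInf U =
      ⨆ e : NonEdge G, ((if e.val.1 ∈ W then (1:ℝ) else 0) +
        (if e.val.2 ∈ W then (1:ℝ) else 0)) := by
    unfold scoreInf
    congr 1
    funext e
    rw [hsup e, hinf e]
    split_ifs <;> ring
  set wid : NonEdge G → ℝ := fun e => ((if e.val.1 ∈ W then (1:ℝ) else 0) +
        (if e.val.2 ∈ W then (1:ℝ) else 0)) with hwid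
  have hbdd : BddAbove (Set.range wid) := Set.Finite.bddAbove (Set.finite_range _)
  have hwid2 : ∀ e, wid e ≤ 2 := by
    intro e; simp only [hwid]; split_ifs <;> norm_num
  have hwid0 : ∀ e, 0 ≤ wid e := by
    intro e; simp only [hwid]; split_ifs <;> norm_num
  have he0wid : 1 ≤ wid e0 := by
    simp only [hwid]
    rcases he0 with h | h <;> rw [h] <;> simp [hw0] <;> split_ifs <;> norm_num
  refine ⟨hne, ?_, ?_⟩
  · by_cases hcl : G.IsClique (W : Set (Fin n))
    · left
      rw [hscore]
      apply le_antisymm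
      · apply ciSup_le
        intro e
        simp only [hwid]
        by_cases h1 : e.val.1 ∈ W <;> by_cases h2 : e.val.2 ∈ W <;> simp [h1, h2]
        exact absurd (hcl h1 h2 (ne_of_lt e.prop.1)) e.prop.2
      · exact le_trans he0wid (le_ciSup hbdd e0)
    · right
      rw [Set.mem_singleton_iff, hscore]
      rw [SimpleGraph.isClique_iff, Set.Pairwise] at hcl
      push_neg at hcl
      obtain ⟨a, ha, b, hb, hab, hnadj⟩ := hcl
      simp only [mem_coe] at ha hb
      have : ∃ e : NonEdge G, e.val.1 ∈ W ∧ e.val.2 ∈ W := by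
        rcases lt_or_gt_of_ne hab with h | h
        · exact ⟨⟨(a, b), h, hnadj⟩, ha, hb⟩
        · exact ⟨⟨(b, a), h, fun hx => hnadj hx.symm⟩, hb, ha⟩
      obtain ⟨e2, h1, h2⟩ := this
      apply le_antisymm
      · exact ciSup_le hwid2
      · have : wid e2 = 2 := by simp [hwid, h1, h2]; norm_num
        calc (2:ℝ) = wid e2 := this.symm
        _ ≤ _ := le_ciSup hbdd e2
  · rw [hscore]
    constructor
    · intro h1 a ha b hb hab
      by_contra hnadj
      simp only [mem_coe] at ha hb
      have : ∃ e : NonEdge G, e.val.1 ∈ W ∧ e.val.2 ∈ W := by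
        rcases lt_or_gt_of_ne hab with h | h
        · exact ⟨⟨(a, b), h, hnadj⟩, ha, hb⟩
        · exact ⟨⟨(b, a), h, fun hx => hnadj hx.symm⟩, hb, ha⟩
      obtain ⟨e2, hh1, hh2⟩ := this
      have h2 : wid e2 = 2 := by simp [hwid, hh1, hh2]; norm_num
      have : (2:ℝ) ≤ 1 := by
        calc (2:ℝ) = wid e2 := h2.symm
        _ ≤ _ := le_ciSup hbdd e2
        _ = 1 := h1
      linarith
    · intro hcl
      apply le_antisymm
      · apply ciSup_le
        intro e
        simp only [hwid]
        by_cases h1 : e.val.1 ∈ W <;> by_cases h2 : e.val.2 ∈ W <;> simp [h1, h2]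
        exact absurd (hcl h1 h2 (ne_of_lt e.prop.1)) e.prop.2
      · exact le_trans he0wid (le_ciSup hbdd e0)
end

section
/- (Corollary to Proposition 3: minimum cut computes the regularized band score.) Let T = {t₁, …, t_n} be time series on a finite domain of size m, α > 0, and x ∈ T. For each coordinate i let p_{i1} < p_{i2} < … be the sorted distinct values {t_j(i) : j ∈ [n]}, and let c_{ij} = |{ ℓ ∈ [n] : t_ℓ(i) ≤ p_{ij} }| with c_{i0} = 0. Build a weighted directed graph G whose nodes are a_{ij} (one per pair (i,j) with p_{ij} defined), b₁, …, b_n, a source θ and a sink η, with the following edges: for each a_{ij} with p_{ij} > x(i), an edge (a_{i(j−1)}, a_{ij}) of weight n − c_{i(j−1)} + (m/α)(p_{i(j−1)} − x(i)); for each a_{ij} with p_{ij} < x(i), an edge (a_{i(j+1)}, a_{ij}) of weight c_{ij} + (m/α)(x(i) − p_{i(j+1)}); for each a_{ij} with p_{ij} = x(i), an edge (θ, a_{ij}) of weight ∞; for each i, with ℓ = |p_i|, edges (a_{iℓ}, η) of weight (m/α)(p_{iℓ} − x(i)) and (a_{i1}, η) of weight (m/α)(x(i) − p_{i1}); and for each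 i ∈ [m], ℓ ∈ [n], with j such that p_{ij} = t_ℓ(i), edges (a_{ij}, b_ℓ) of weight 1 and (b_ℓ, a_{ij}) of weight ∞. For a partition (X, Y) of the nodes with θ ∈ X and η ∈ Y, the cut value is the total weight of edges from X to Y. Then if (X, Y) is a minimum (θ,η)-cut of G and U = { t_ℓ : b_ℓ ∈ X }, one has Reg(U;α) = min { Reg(U′;α) : U′ ⊆ T, x ∈ U′ }; equivalently, the minimum cut value equals n·m + (m/α) · min { Reg(U′;α) : U′ ⊆ T, x ∈ U′ }. -/
open Finset
open scoped Classical ENNReal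

noncomputable section

/-- The distinct values observed at coordinate `i` among the time series `t₁, …, t_n`. -/
def vals {n m : ℕ} (t : Fin n → Fin m → ℝ) (i : Fin m) : Finset ℝ :=
  Finset.univ.image fun ℓ => t ℓ i

/-- `cnt t i v` is the number of time series whose value at coordinate `i` is at most `v`. -/
def cnt {n m : ℕ} (t : Fin n → Fin m → ℝ) (i : Fin m) (v : ℝ) : ℕ :=
  (Finset.univ.filter fun ℓ => t ℓ i ≤ v).card

/-- `u` and `v` are consecutive values at coordinate `i`: both occur, `u < v`, and no
observed value lies strictly between them. -/
def Consecutive {n m : ℕ} (t : Fin n → Fin m → ℝ) (i : Fin m) (u v : ℝ) : Prop :=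
  u ∈ vals t i ∧ v ∈ vals t i ∧ u < v ∧ ∀ w ∈ vals t i, ¬ (u < w ∧ w < v)

/-- The nodes of the minimum-cut graph: a node `a i v` for each coordinate `i` and value
`v` (only nodes with `v ∈ vals t i` carry edges), a node `b ℓ` for each time series, a
source `src` (θ) and a sink `snk` (η). -/
inductive Node (n m : ℕ) : Type
  | a : Fin m → ℝ → Node n m
  | b : Fin n → Node n m
  | src : Node n m
  | snk : Node n m

/-- The edge weights of the minimum-cut graph of the paper (weight `0` means no edge):
* `(a i u, a i v)` with `u, v` consecutive at `i` and `v > x i` has weight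
  `n − c_{i,u} + (m/α)(u − x i)`;
* `(a i u, a i v)` with `v, u` consecutive at `i` and `v < x i` has weight
  `c_{i,v} + (m/α)(x i − u)`;
* `(θ, a i v)` with `v = x i` has weight `∞`;
* `(a i v, η)` with `v` the largest value at `i` has weight `(m/α)(v − x i)`, and with
  `v` the smallest value at `i` has weight `(m/α)(x i − v)`;
* `(a i v, b ℓ)` with `t ℓ i = v` has weight `1` and `(b ℓ, a i v)` has weight `∞`. -/
def wgt {n m : ℕ} (t : Fin n → Fin m → ℝ) (x : Fin m → ℝ) (α : ℝ) :
    Node n m → Node n m → ℝ≥0∞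
  | .a i u, .a i' v =>
      if i = i' then
        (if Consecutive t i u v ∧ x i < v then
            ENNReal.ofReal ((n : ℝ) - (cnt t i u : ℝ) + ((m : ℝ) / α) * (u - x i)) else 0) +
        (if Consecutive t i v u ∧ v < x i then
            ENNReal.ofReal ((cnt t i v : ℝ) + ((m : ℝ) / α) * (x i - u)) else 0)
      else 0
  | .src, .a i v => if v = x i then ⊤ else 0
  | .a i v, .snk =>
      (if v ∈ vals t i ∧ (∀ w ∈ vals t i, w ≤ v) then
          ENNReal.ofReal (((m : ℝ) / α) * (v - x i)) else 0) +
      (if v ∈ vals t i ∧ (∀ w ∈ vals t i, v ≤ w) then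
          ENNReal.ofReal (((m : ℝ) / α) * (x i - v)) else 0)
  | .a i v, .b ℓ => if t ℓ i = v then 1 else 0
  | .b ℓ, .a i v => if t ℓ i = v then ⊤ else 0
  | _, _ => 0

/-- The value of the cut `(X, Xᶜ)`: the total weight of edges from `X` to its complement. -/
def cutVal {n m : ℕ} (t : Fin n → Fin m → ℝ) (x : Fin m → ℝ) (α : ℝ)
    (X : Set (Node n m)) : ℝ≥0∞ :=
  ∑' p : Node n m × Node n m,
    if p.1 ∈ X ∧ p.2 ∉ X then wgt t x α p.1 p.2 else 0

/-- The envelope-area score of the sub-family of `t` picked out by an index set `S`. -/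
def score1Idx {n m : ℕ} (t : Fin n → Fin m → ℝ) (S : Finset (Fin n)) : ℝ :=
  ∑ i : Fin m, (sSup ((fun ℓ => t ℓ i) '' (S : Set (Fin n))) -
                sInf ((fun ℓ => t ℓ i) '' (S : Set (Fin n))))

/-- The regularized score `Reg(S;α) = Score₁(S) − α|S|`. -/
def regIdx {n m : ℕ} (t : Fin n → Fin m → ℝ) (α : ℝ) (S : Finset (Fin n)) : ℝ :=
  score1Idx t S - α * S.card

/-!
Write `x = t x₀`. A cut of finite value contains every `a i (x i)` and, together with each
`b ℓ`, every `a i (t ℓ i)`. The edges leaving such a cut `X` then split by coordinate: in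
coordinate `i` they are the unit edges `a i (t ℓ i) → b ℓ` with `b ℓ ∉ X`, one edge of weight
`#{ℓ | u < t ℓ i} + (m/α)(u - x i)` for each value `u ≥ x i` at which `X` leaves the chain upwards
(the next node up, or the sink above the top value, lies outside `X`), and symmetrically
downwards.

For `x₀ ∈ S`, the band of values between the lower and the upper envelope of `S` leaves each
chain once in each direction, and its cut costs
`m (n - |S|) + (m/α) Score₁(S) = n m + (m/α) Reg(S)`.

Conversely, let `U = {ℓ | b ℓ ∈ X}` and let `W` be nonempty with all its nodes `a i (t ℓ i)`
in `X`. The highest and the lowest value in `X` are exits whose length terms cover the envelope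
width of `W`, and each series outside `U` is paid for by its own unit edge or by the count term of
an exit strictly below or above its value. So `X` costs at least `m (n - |U|) + (m/α) Score₁(W)`.
For a minimum cut, `W = U ∪ {x₀}` compared with the band of `W` forces `x₀ ∈ U`, and `W = U`
shows that `X` costs exactly the band value of `U`, which is therefore the least one.
-/

namespace RegBand

variable {n m : ℕ}

section Values

variable {t : Fin n → Fin m → ℝ} {i : Fin m}

@[simp]
lemma mem_vals (t : Fin n → Fin m → ℝ) (ℓ : Fin n) (i : Fin m) : t ℓ i ∈ vals t i :=
  mem_image_of_mem _ (mem_univ _)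

lemma Consecutive.right_unique {u v v' : ℝ} (h : Consecutive t i u v)
    (h' : Consecutive t i u v') : v = v' := by
  by_contra hne
  rcases lt_or_gt_of_ne hne with hlt | hlt
  · exact h'.2.2.2 v h.2.1 ⟨h.2.2.1, hlt⟩
  · exact h.2.2.2 v' h'.2.1 ⟨h'.2.2.1, hlt⟩

lemma Consecutive.left_unique {u u' v : ℝ} (h : Consecutive t i u v)
    (h' : Consecutive t i u' v) : u = u' := by
  by_contra hne
  rcases lt_or_gt_of_ne hne with hlt | hlt
  · exact h.2.2.2 u' h'.1 ⟨hlt, h'.2.2.1⟩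
  · exact h'.2.2.2 u h.1 ⟨hlt, h.2.2.1⟩

lemma exists_consecutive_right {u w : ℝ} (hu : u ∈ vals t i) (hw : w ∈ vals t i)
    (huw : u < w) : ∃ v, Consecutive t i u v ∧ v ≤ w := by
  set F := (vals t i).filter (u < ·)
  have hwF : w ∈ F := mem_filter.mpr ⟨hw, huw⟩
  have hmin := mem_filter.mp (F.min'_mem ⟨w, hwF⟩)
  refine ⟨F.min' ⟨w, hwF⟩, ⟨hu, hmin.1, hmin.2, fun z hz ⟨huz, hzv⟩ => ?_⟩, F.min'_le w hwF⟩
  exact (F.min'_le z (mem_filter.mpr ⟨hz, huz⟩)).not_gt hzv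

lemma exists_consecutive_left {u w : ℝ} (hu : u ∈ vals t i) (hw : w ∈ vals t i)
    (hwu : w < u) : ∃ v, Consecutive t i v u ∧ w ≤ v := by
  set F := (vals t i).filter (· < u)
  have hwF : w ∈ F := mem_filter.mpr ⟨hw, hwu⟩
  have hmax := mem_filter.mp (F.max'_mem ⟨w, hwF⟩)
  refine ⟨F.max' ⟨w, hwF⟩, ⟨hmax.1, hu, hmax.2, fun z hz ⟨hvz, hzu⟩ => ?_⟩, F.le_max' w hwF⟩
  exact (F.le_max' z (mem_filter.mpr ⟨hz, hzu⟩)).not_gt hvz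

lemma cnt_add_card_lt (t : Fin n → Fin m → ℝ) (i : Fin m) (u : ℝ) :
    cnt t i u + #{ℓ | u < t ℓ i} = n := by
  simpa [cnt, not_le] using card_filter_add_card_filter_not (s := univ) (fun ℓ => t ℓ i ≤ u)

lemma Consecutive.cnt_eq {u v : ℝ} (h : Consecutive t i v u) :
    cnt t i v = #{ℓ | t ℓ i < u} := by
  refine congrArg card (filter_congr fun ℓ _ => ⟨fun h' => h'.trans_lt h.2.2.1, fun h' => ?_⟩)
  by_contra hle
  exact h.2.2.2 (t ℓ i) (mem_vals t ℓ i) ⟨not_le.mp hle, h'⟩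

lemma card_partition_by_band {S : Finset (Fin n)} {lo hi : ℝ} (hlohi : lo ≤ hi)
    (hS : ∀ ℓ ∈ S, lo ≤ t ℓ i ∧ t ℓ i ≤ hi) :
    #{ℓ | hi < t ℓ i} + #{ℓ | t ℓ i < lo} + #{ℓ | (lo ≤ t ℓ i ∧ t ℓ i ≤ hi) ∧ ℓ ∉ S} + #S
      = n := by
  have hone : ∀ ℓ : Fin n, ((if hi < t ℓ i then 1 else 0) + (if t ℓ i < lo then 1 else 0) +
      (if (lo ≤ t ℓ i ∧ t ℓ i ≤ hi) ∧ ℓ ∉ S then 1 else 0) + if ℓ ∈ S then 1 else 0) = 1 := by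
    intro ℓ
    by_cases hℓ : ℓ ∈ S
    · simp [hℓ, not_lt.mpr (hS ℓ hℓ).1, not_lt.mpr (hS ℓ hℓ).2]
    · rcases lt_or_ge hi (t ℓ i) with h | h
      · simp [hℓ, h, not_lt.mpr (hlohi.trans h.le), not_le.mpr h]
      · rcases lt_or_ge (t ℓ i) lo with h' | h'
        · simp [hℓ, h', not_lt.mpr h, not_le.mpr h']
        · simp [hℓ, h, h', not_lt.mpr h, not_lt.mpr h']
  simpa [sum_add_distrib, sum_boole] using sum_congr rfl fun ℓ (_ : ℓ ∈ univ) => hone ℓ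

end Values

def Node.equivSum : Node n m ≃ (Fin m × ℝ) ⊕ Fin n ⊕ Bool where
  toFun
    | .a i v => .inl (i, v)
    | .b ℓ => .inr (.inl ℓ)
    | .src => .inr (.inr true)
    | .snk => .inr (.inr false)
  invFun
    | .inl (i, v) => .a i v
    | .inr (.inl ℓ) => .b ℓ
    | .inr (.inr true) => .src
    | .inr (.inr false) => .snk
  left_inv p := by cases p <;> rfl
  right_inv p := by rcases p with ⟨i, v⟩ | ℓ | _ | _ <;> rfl

lemma tsum_node (f : Node n m → ℝ≥0∞) :
    ∑' p, f p = ∑ i, ∑' v, f (.a i v) + ∑ ℓ, f (.b ℓ) + f .src + f .snk := by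
  rw [← Node.equivSum.symm.tsum_eq, ENNReal.summable.tsum_sum ENNReal.summable,
    ENNReal.summable.tsum_sum ENNReal.summable,
    ENNReal.tsum_prod', tsum_fintype, tsum_fintype, tsum_fintype, Fintype.sum_bool]
  simp only [Node.equivSum, Equiv.coe_fn_symm_mk, add_assoc]

section Weights

variable (t : Fin n → Fin m → ℝ) (x₀ : Fin n) (α : ℝ)

def upEdge (i : Fin m) (u v : ℝ) : ℝ≥0∞ :=
  if Consecutive t i u v ∧ t x₀ i < v then
    ENNReal.ofReal ((n : ℝ) - (cnt t i u : ℝ) + ((m : ℝ) / α) * (u - t x₀ i)) else 0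

def downEdge (i : Fin m) (u v : ℝ) : ℝ≥0∞ :=
  if Consecutive t i v u ∧ v < t x₀ i then
    ENNReal.ofReal ((cnt t i v : ℝ) + ((m : ℝ) / α) * (t x₀ i - u)) else 0

def topEdge (i : Fin m) (v : ℝ) : ℝ≥0∞ :=
  if v ∈ vals t i ∧ (∀ w ∈ vals t i, w ≤ v) then
    ENNReal.ofReal (((m : ℝ) / α) * (v - t x₀ i)) else 0

def bottomEdge (i : Fin m) (v : ℝ) : ℝ≥0∞ :=
  if v ∈ vals t i ∧ (∀ w ∈ vals t i, v ≤ w) then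
    ENNReal.ofReal (((m : ℝ) / α) * (t x₀ i - v)) else 0

lemma wgt_a_a (i : Fin m) (u v : ℝ) :
    wgt t (t x₀) α (.a i u) (.a i v) = upEdge t x₀ α i u v + downEdge t x₀ α i u v :=
  if_pos rfl

lemma wgt_a_snk (i : Fin m) (v : ℝ) :
    wgt t (t x₀) α (.a i v) .snk = topEdge t x₀ α i v + bottomEdge t x₀ α i v :=
  rfl

def upW (i : Fin m) (u : ℝ) : ℝ := #{ℓ | u < t ℓ i} + ((m : ℝ) / α) * (u - t x₀ i)

def downW (i : Fin m) (u : ℝ) : ℝ := #{ℓ | t ℓ i < u} + ((m : ℝ) / α) * (t x₀ i - u)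

variable (X : Set (Node n m))

def UpExit (i : Fin m) (u : ℝ) : Prop :=
  Node.a i u ∈ X ∧ t x₀ i ≤ u ∧ ∀ v, Consecutive t i u v → Node.a i v ∉ X

def DownExit (i : Fin m) (u : ℝ) : Prop :=
  Node.a i u ∈ X ∧ u ≤ t x₀ i ∧ ∀ v, Consecutive t i v u → Node.a i v ∉ X

variable {t x₀ α X}

lemma tsum_upEdge_add_topEdge {i : Fin m} {u : ℝ} (hu : u ∈ vals t i)
    (hX : Node.a i u ∈ X) :
    (∑' v, if Node.a i v ∉ X then upEdge t x₀ α i u v else 0) + topEdge t x₀ α i u =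
      if UpExit t x₀ X i u then ENNReal.ofReal (upW t x₀ α i u) else 0 := by
  have hx := mem_vals t x₀ i
  by_cases hs : ∃ s, Consecutive t i u s
  · obtain ⟨s, hs⟩ := hs
    have hsum : ∀ v, (if Node.a i v ∉ X then upEdge t x₀ α i u v else 0) =
        if v = s then (if Node.a i s ∉ X then upEdge t x₀ α i u s else 0) else 0 := by
      intro v
      by_cases hv : v = s
      · subst hv; rw [if_pos rfl]
      · have hne : ¬ (Consecutive t i u v ∧ t x₀ i < v) :=
          fun h => hv (Consecutive.right_unique h.1 hs)
        simp [hv, upEdge, hne]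
    have htop : topEdge t x₀ α i u = 0 :=
      if_neg fun h => (h.2 s hs.2.1).not_gt hs.2.2.1
    have hxu : t x₀ i ≤ u ↔ t x₀ i < s :=
      ⟨fun h => h.trans_lt hs.2.2.1, fun h => not_lt.mp fun hux => hs.2.2.2 _ hx ⟨hux, h⟩⟩
    have hexit : UpExit t x₀ X i u ↔ t x₀ i < s ∧ Node.a i s ∉ X :=
      ⟨fun h => ⟨hxu.mp h.2.1, h.2.2 s hs⟩,
        fun h => ⟨hX, hxu.mpr h.1, fun v hv => Consecutive.right_unique hs hv ▸ h.2⟩⟩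
    have hcnt : (n : ℝ) - cnt t i u = #{ℓ | u < t ℓ i} := by
      have h : (cnt t i u : ℝ) + #{ℓ | u < t ℓ i} = n := by
        exact_mod_cast cnt_add_card_lt t i u
      linarith
    rw [tsum_congr hsum, tsum_ite_eq, htop, add_zero, upEdge, upW, hcnt, if_congr hexit rfl rfl]
    by_cases h1 : Node.a i s ∉ X <;> by_cases h2 : t x₀ i < s <;> simp [h1, h2, hs]
  · push Not at hs
    have hmax : ∀ w ∈ vals t i, w ≤ u := fun w hw => not_lt.mp fun huw =>
      let ⟨v, hv, _⟩ := exists_consecutive_right hu hw huw; hs v hv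
    have hexit : UpExit t x₀ X i u := ⟨hX, hmax _ hx, fun v hv => (hs v hv).elim⟩
    have hcard : #{ℓ | u < t ℓ i} = 0 :=
      card_eq_zero.mpr <| filter_eq_empty_iff.mpr fun ℓ _ => not_lt.mpr (hmax _ (mem_vals t ℓ i))
    rw [topEdge, if_pos ⟨hu, hmax⟩, if_pos hexit, upW, hcard]
    simp [upEdge, hs]

lemma tsum_downEdge_add_bottomEdge {i : Fin m} {u : ℝ} (hu : u ∈ vals t i)
    (hX : Node.a i u ∈ X) :
    (∑' v, if Node.a i v ∉ X then downEdge t x₀ α i u v else 0) + bottomEdge t x₀ α i u =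
      if DownExit t x₀ X i u then ENNReal.ofReal (downW t x₀ α i u) else 0 := by
  have hx := mem_vals t x₀ i
  by_cases hp : ∃ p, Consecutive t i p u
  · obtain ⟨p, hp⟩ := hp
    have hsum : ∀ v, (if Node.a i v ∉ X then downEdge t x₀ α i u v else 0) =
        if v = p then (if Node.a i p ∉ X then downEdge t x₀ α i u p else 0) else 0 := by
      intro v
      by_cases hv : v = p
      · subst hv; rw [if_pos rfl]
      · have hne : ¬ (Consecutive t i v u ∧ v < t x₀ i) :=
          fun h => hv (Consecutive.left_unique h.1 hp)
        simp [hv, downEdge, hne]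
    have hbot : bottomEdge t x₀ α i u = 0 :=
      if_neg fun h => (h.2 p hp.1).not_gt hp.2.2.1
    have hux : u ≤ t x₀ i ↔ p < t x₀ i :=
      ⟨fun h => hp.2.2.1.trans_le h, fun h => not_lt.mp fun hxu => hp.2.2.2 _ hx ⟨h, hxu⟩⟩
    have hexit : DownExit t x₀ X i u ↔ p < t x₀ i ∧ Node.a i p ∉ X :=
      ⟨fun h => ⟨hux.mp h.2.1, h.2.2 p hp⟩,
        fun h => ⟨hX, hux.mpr h.1, fun v hv => Consecutive.left_unique hp hv ▸ h.2⟩⟩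
    rw [tsum_congr hsum, tsum_ite_eq, hbot, add_zero, downEdge, downW, Consecutive.cnt_eq hp,
      if_congr hexit rfl rfl]
    by_cases h1 : Node.a i p ∉ X <;> by_cases h2 : p < t x₀ i <;> simp [h1, h2, hp]
  · push Not at hp
    have hmin : ∀ w ∈ vals t i, u ≤ w := fun w hw => not_lt.mp fun hwu =>
      let ⟨v, hv, _⟩ := exists_consecutive_left hu hw hwu; hp v hv
    have hexit : DownExit t x₀ X i u := ⟨hX, hmin _ hx, fun v hv => (hp v hv).elim⟩
    have hcard : #{ℓ | t ℓ i < u} = 0 :=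
      card_eq_zero.mpr <| filter_eq_empty_iff.mpr fun ℓ _ => not_lt.mpr (hmin _ (mem_vals t ℓ i))
    rw [bottomEdge, if_pos ⟨hu, hmin⟩, if_pos hexit, downW, hcard]
    simp [downEdge, hp]

lemma tsum_crossing_from_a (hsnk : Node.snk ∉ X) {i : Fin m} {u : ℝ}
    (hu : u ∈ vals t i) :
    ∑' q, (if Node.a i u ∈ X ∧ q ∉ X then wgt t (t x₀) α (.a i u) q else 0) =
      (if UpExit t x₀ X i u then ENNReal.ofReal (upW t x₀ α i u) else 0) +
      (if DownExit t x₀ X i u then ENNReal.ofReal (downW t x₀ α i u) else 0) +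
      ∑ ℓ, if Node.a i u ∈ X ∧ Node.b ℓ ∉ X ∧ t ℓ i = u then 1 else 0 := by
  by_cases hX : Node.a i u ∈ X
  · simp only [hX, true_and]
    rw [tsum_node, Finset.sum_eq_single i (fun i' _ hi' => by simp [wgt, Ne.symm hi'])
      (by simp), ← tsum_upEdge_add_topEdge hu hX, ← tsum_downEdge_add_bottomEdge hu hX]
    simp only [wgt_a_a, wgt_a_snk, ite_add_zero, ENNReal.tsum_add, if_pos hsnk]
    have hsrc : wgt t (t x₀) α (.a i u) .src = 0 := rfl
    have hb : ∀ ℓ, wgt t (t x₀) α (.a i u) (.b ℓ) = if t ℓ i = u then 1 else 0 :=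
      fun _ => rfl
    simp only [hsrc, hb, ite_self, add_zero, ← ite_and]
    ring
  · simp [hX, UpExit, DownExit]

lemma wgt_a_eq_zero_of_notMem {i : Fin m} {u : ℝ} (hu : u ∉ vals t i) (q : Node n m) :
    wgt t (t x₀) α (.a i u) q = 0 := by
  rcases q with ⟨i', v⟩ | ℓ | _ | _
  · by_cases hi : i = i'
    · subst hi
      rw [wgt_a_a, upEdge, downEdge, if_neg fun h => hu h.1.1, if_neg fun h => hu h.1.2.1,
        add_zero]
    · exact if_neg hi
  · exact if_neg fun h : t ℓ i = u => hu (h ▸ mem_vals t ℓ i)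
  · rfl
  · rw [wgt_a_snk, topEdge, bottomEdge, if_neg fun h => hu h.1, if_neg fun h => hu h.1,
      add_zero]

lemma upW_nonneg (hα : 0 < α) {i : Fin m} {u : ℝ} (h : t x₀ i ≤ u) :
    0 ≤ upW t x₀ α i u := by
  have := div_nonneg (Nat.cast_nonneg m) hα.le
  exact add_nonneg (Nat.cast_nonneg _) (mul_nonneg this (sub_nonneg.mpr h))

lemma downW_nonneg (hα : 0 < α) {i : Fin m} {u : ℝ} (h : u ≤ t x₀ i) :
    0 ≤ downW t x₀ α i u := by
  have := div_nonneg (Nat.cast_nonneg m) hα.le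
  exact add_nonneg (Nat.cast_nonneg _) (mul_nonneg this (sub_nonneg.mpr h))

end Weights

section Decomposition

variable {t : Fin n → Fin m → ℝ} {x₀ : Fin n} {α : ℝ} {X : Set (Node n m)}

variable (t x₀ X) in
def upExits (i : Fin m) : Finset ℝ := (vals t i).filter (UpExit t x₀ X i)

variable (t x₀ X) in
def downExits (i : Fin m) : Finset ℝ := (vals t i).filter (DownExit t x₀ X i)

variable (t x₀ α X) in
def coordCut (i : Fin m) : ℝ :=
  ∑ u ∈ upExits t x₀ X i, upW t x₀ α i u + ∑ u ∈ downExits t x₀ X i, downW t x₀ α i u +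
    #{ℓ | Node.a i (t ℓ i) ∈ X ∧ Node.b ℓ ∉ X}

lemma coordCut_nonneg (hα : 0 < α) (i : Fin m) : 0 ≤ coordCut t x₀ α X i :=
  add_nonneg (add_nonneg (sum_nonneg fun _ hu => upW_nonneg hα (mem_filter.mp hu).2.2.1)
    (sum_nonneg fun _ hu => downW_nonneg hα (mem_filter.mp hu).2.2.1)) (Nat.cast_nonneg _)

lemma sum_tsum_crossing_from_a (hα : 0 < α) (hsnk : Node.snk ∉ X) (i : Fin m) :
    ∑ u ∈ vals t i, ∑' q,
        (if Node.a i u ∈ X ∧ q ∉ X then wgt t (t x₀) α (.a i u) q else 0) =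
      ENNReal.ofReal (coordCut t x₀ α X i) := by
  have hcount : ∀ ℓ, ∑ u ∈ vals t i,
      (if Node.a i u ∈ X ∧ Node.b ℓ ∉ X ∧ t ℓ i = u then (1 : ℝ≥0∞) else 0) =
        if Node.a i (t ℓ i) ∈ X ∧ Node.b ℓ ∉ X then 1 else 0 := by
    intro ℓ
    have h := sum_ite_eq (vals t i) (t ℓ i) fun _ =>
      if Node.a i (t ℓ i) ∈ X ∧ Node.b ℓ ∉ X then (1 : ℝ≥0∞) else 0
    rw [if_pos (mem_vals t ℓ i)] at h
    rw [← h]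
    refine sum_congr rfl fun u _ => ?_
    by_cases h : t ℓ i = u
    · subst h; simp
    · simp [h]
  have hup : ∀ u ∈ upExits t x₀ X i, 0 ≤ upW t x₀ α i u :=
    fun _ hu => upW_nonneg hα (mem_filter.mp hu).2.2.1
  have hdown : ∀ u ∈ downExits t x₀ X i, 0 ≤ downW t x₀ α i u :=
    fun _ hu => downW_nonneg hα (mem_filter.mp hu).2.2.1
  rw [sum_congr rfl fun u hu => tsum_crossing_from_a hsnk hu, sum_add_distrib,
    sum_add_distrib, ← sum_filter, ← sum_filter, sum_comm, sum_congr rfl fun ℓ _ => hcount ℓ,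
    sum_boole,
    coordCut, ENNReal.ofReal_add (add_nonneg (sum_nonneg hup) (sum_nonneg hdown))
      (Nat.cast_nonneg _), ENNReal.ofReal_add (sum_nonneg hup) (sum_nonneg hdown),
    ENNReal.ofReal_sum_of_nonneg hup, ENNReal.ofReal_sum_of_nonneg hdown,
    ENNReal.ofReal_natCast, upExits, downExits]

theorem cutVal_eq_sum_coordCut (hα : 0 < α) (hsnk : Node.snk ∉ X)
    (hsrc : ∀ i, Node.a i (t x₀ i) ∈ X) (hb : ∀ ℓ, Node.b ℓ ∈ X → ∀ i, Node.a i (t ℓ i) ∈ X) :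
    cutVal t (t x₀) α X = ENNReal.ofReal (∑ i, coordCut t x₀ α X i) := by
  have hb_row : ∀ ℓ q,
      (if Node.b ℓ ∈ X ∧ q ∉ X then wgt t (t x₀) α (.b ℓ) q else 0) = 0 := by
    rintro ℓ (⟨i, v⟩ | _ | _ | _)
    · by_cases h : Node.b ℓ ∈ X ∧ Node.a i v ∉ X
      · rw [if_pos h]; exact if_neg fun hv : t ℓ i = v => h.2 (hv ▸ hb ℓ h.1 i)
      · exact if_neg h
    all_goals exact ite_eq_right_iff.mpr fun _ => rfl
  have hsrc_row : ∀ q,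
      (if Node.src ∈ X ∧ q ∉ X then wgt t (t x₀) α .src q else 0) = 0 := by
    rintro (⟨i, v⟩ | _ | _ | _)
    · by_cases h : Node.src ∈ X ∧ Node.a i v ∉ X
      · rw [if_pos h]; exact if_neg fun hv : v = t x₀ i => h.2 (hv ▸ hsrc i)
      · exact if_neg h
    all_goals exact ite_eq_right_iff.mpr fun _ => rfl
  have hsnk_row : ∀ q,
      (if Node.snk ∈ X ∧ q ∉ X then wgt t (t x₀) α .snk q else 0) = 0 :=
    fun _ => if_neg fun h => hsnk h.1
  rw [cutVal, ENNReal.tsum_prod', tsum_node]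
  simp only [hb_row, hsrc_row, hsnk_row, tsum_zero, sum_const_zero, add_zero]
  rw [ENNReal.ofReal_sum_of_nonneg fun i _ => coordCut_nonneg hα i]
  refine sum_congr rfl fun i _ => ?_
  rw [tsum_eq_sum (s := vals t i) fun u hu => ?_, sum_tsum_crossing_from_a hα hsnk]
  exact ENNReal.tsum_eq_zero.mpr fun q => by rw [wgt_a_eq_zero_of_notMem hu, ite_self]

end Decomposition

section Envelope

variable (t : Fin n → Fin m → ℝ) (S : Finset (Fin n)) (i : Fin m)

def upperEnv : ℝ := sSup ((fun ℓ => t ℓ i) '' (S : Set (Fin n)))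

def lowerEnv : ℝ := sInf ((fun ℓ => t ℓ i) '' (S : Set (Fin n)))

lemma score1Idx_eq_sum_env : score1Idx t S = ∑ i, (upperEnv t S i - lowerEnv t S i) := rfl

variable {t S i}

lemma le_upperEnv {ℓ : Fin n} (hℓ : ℓ ∈ S) : t ℓ i ≤ upperEnv t S i :=
  le_csSup (S.finite_toSet.image _).bddAbove (Set.mem_image_of_mem _ hℓ)

lemma lowerEnv_le {ℓ : Fin n} (hℓ : ℓ ∈ S) : lowerEnv t S i ≤ t ℓ i :=
  csInf_le (S.finite_toSet.image _).bddBelow (Set.mem_image_of_mem _ hℓ)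

lemma exists_eq_upperEnv (hS : S.Nonempty) : ∃ ℓ ∈ S, t ℓ i = upperEnv t S i :=
  (hS.to_set.image fun ℓ => t ℓ i).csSup_mem (S.finite_toSet.image _)

lemma exists_eq_lowerEnv (hS : S.Nonempty) : ∃ ℓ ∈ S, t ℓ i = lowerEnv t S i :=
  (hS.to_set.image fun ℓ => t ℓ i).csInf_mem (S.finite_toSet.image _)

lemma upperEnv_mem_vals (hS : S.Nonempty) : upperEnv t S i ∈ vals t i :=
  let ⟨ℓ, _, hℓ⟩ := exists_eq_upperEnv hS; hℓ ▸ mem_vals t ℓ i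

lemma lowerEnv_mem_vals (hS : S.Nonempty) : lowerEnv t S i ∈ vals t i :=
  let ⟨ℓ, _, hℓ⟩ := exists_eq_lowerEnv hS; hℓ ▸ mem_vals t ℓ i

end Envelope

section BandCut

variable {t : Fin n → Fin m → ℝ} {x₀ : Fin n} {α : ℝ} {S : Finset (Fin n)}

variable (t α S) in
def bandValue : ℝ := m * (n - #S) + (m / α) * score1Idx t S

lemma bandValue_eq_regIdx (hα : α ≠ 0) : bandValue t α S = n * m + (m / α) * regIdx t α S := by
  rw [bandValue, regIdx]; field_simp; ring

lemma bandValue_nonneg (hα : 0 < α) (hS : S.Nonempty) : 0 ≤ bandValue t α S := by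
  have hcard : (#S : ℝ) ≤ n := by
    exact_mod_cast (card_le_univ S).trans_eq (Fintype.card_fin n)
  have hscore : 0 ≤ score1Idx t S := sum_nonneg fun i _ =>
    let ⟨ℓ, hℓ⟩ := hS; sub_nonneg.mpr ((lowerEnv_le hℓ).trans (le_upperEnv (i := i) hℓ))
  exact add_nonneg (mul_nonneg (Nat.cast_nonneg m) (sub_nonneg.mpr hcard))
    (mul_nonneg (div_nonneg (Nat.cast_nonneg m) hα.le) hscore)

variable (t S) in
def bandCut : Set (Node n m) := fun p =>
  match p with
  | .a i v => lowerEnv t S i ≤ v ∧ v ≤ upperEnv t S i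
  | .b ℓ => ℓ ∈ S
  | .src => True
  | .snk => False

lemma upExits_bandCut (hS : x₀ ∈ S) (i : Fin m) :
    upExits t x₀ (bandCut t S) i = {upperEnv t S i} := by
  have hhi := upperEnv_mem_vals (t := t) (i := i) ⟨x₀, hS⟩
  ext u
  simp only [upExits, mem_filter, mem_singleton]
  constructor
  · rintro ⟨hu, ⟨hlo, hhi'⟩, -, hexit⟩
    refine le_antisymm hhi' (not_lt.mp fun hlt => ?_)
    obtain ⟨v, hv, hvhi⟩ := exists_consecutive_right hu hhi hlt
    exact hexit v hv ⟨hlo.trans hv.2.2.1.le, hvhi⟩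
  · rintro rfl
    exact ⟨hhi, ⟨(lowerEnv_le hS).trans (le_upperEnv hS), le_rfl⟩, le_upperEnv hS,
      fun v hv hvX => hv.2.2.1.not_ge hvX.2⟩

lemma downExits_bandCut (hS : x₀ ∈ S) (i : Fin m) :
    downExits t x₀ (bandCut t S) i = {lowerEnv t S i} := by
  have hlo := lowerEnv_mem_vals (t := t) (i := i) ⟨x₀, hS⟩
  ext u
  simp only [downExits, mem_filter, mem_singleton]
  constructor
  · rintro ⟨hu, ⟨hlo', hhi⟩, -, hexit⟩
    refine le_antisymm (not_lt.mp fun hlt => ?_) hlo'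
    obtain ⟨v, hv, hlov⟩ := exists_consecutive_left hu hlo hlt
    exact hexit v hv ⟨hlov, hv.2.2.1.le.trans hhi⟩
  · rintro rfl
    exact ⟨hlo, ⟨le_rfl, (lowerEnv_le hS).trans (le_upperEnv hS)⟩, lowerEnv_le hS,
      fun v hv hvX => hv.2.2.1.not_ge hvX.1⟩

lemma coordCut_bandCut (hS : x₀ ∈ S) (i : Fin m) :
    coordCut t x₀ α (bandCut t S) i =
      (n - #S) + (m / α) * (upperEnv t S i - lowerEnv t S i) := by
  have hcount := card_partition_by_band (t := t) (S := S) (i := i)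
    ((lowerEnv_le hS).trans (le_upperEnv hS)) fun ℓ hℓ => ⟨lowerEnv_le hℓ, le_upperEnv hℓ⟩
  have hcount' : (#{ℓ | upperEnv t S i < t ℓ i} : ℝ) + #{ℓ | t ℓ i < lowerEnv t S i} +
      #{ℓ | (lowerEnv t S i ≤ t ℓ i ∧ t ℓ i ≤ upperEnv t S i) ∧ ℓ ∉ S} + #S = n := by
    exact_mod_cast hcount
  have hcross : #{ℓ | Node.a i (t ℓ i) ∈ bandCut t S ∧ Node.b ℓ ∉ bandCut t S} =
      #{ℓ | (lowerEnv t S i ≤ t ℓ i ∧ t ℓ i ≤ upperEnv t S i) ∧ ℓ ∉ S} :=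
    congrArg card (filter_congr fun _ _ => Iff.rfl)
  rw [coordCut, upExits_bandCut hS, downExits_bandCut hS, sum_singleton, sum_singleton, upW,
    downW, hcross]
  linarith

theorem cutVal_bandCut (hα : 0 < α) (hS : x₀ ∈ S) :
    cutVal t (t x₀) α (bandCut t S) = ENNReal.ofReal (bandValue t α S) := by
  rw [bandValue, score1Idx_eq_sum_env]
  rw [cutVal_eq_sum_coordCut (X := bandCut t S) hα id (fun i => ⟨lowerEnv_le hS, le_upperEnv hS⟩)
    (fun ℓ hℓ i => ⟨lowerEnv_le hℓ, le_upperEnv hℓ⟩)]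
  simp only [coordCut_bandCut hS, sum_add_distrib, sum_const, card_univ, Fintype.card_fin,
    nsmul_eq_mul, ← mul_sum]

end BandCut

section LowerBound

variable {t : Fin n → Fin m → ℝ} {x₀ : Fin n} {α : ℝ} {X : Set (Node n m)} {i : Fin m}

lemma exists_upExit_ge (hx : Node.a i (t x₀ i) ∈ X) {v : ℝ} (hv : v ∈ vals t i)
    (hvX : Node.a i v ∈ X) : ∃ u ∈ upExits t x₀ X i, v ≤ u := by
  set A := (vals t i).filter (Node.a i · ∈ X)
  have hvA : v ∈ A := mem_filter.mpr ⟨hv, hvX⟩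
  have hxA : t x₀ i ∈ A := mem_filter.mpr ⟨mem_vals t x₀ i, hx⟩
  have hmax := mem_filter.mp (A.max'_mem ⟨v, hvA⟩)
  refine ⟨A.max' ⟨v, hvA⟩,
    mem_filter.mpr ⟨hmax.1, hmax.2, A.le_max' _ hxA, fun w hw hwX => ?_⟩, A.le_max' v hvA⟩
  exact (A.le_max' w (mem_filter.mpr ⟨hw.2.1, hwX⟩)).not_gt hw.2.2.1

lemma exists_downExit_le (hx : Node.a i (t x₀ i) ∈ X) {v : ℝ} (hv : v ∈ vals t i)
    (hvX : Node.a i v ∈ X) : ∃ u ∈ downExits t x₀ X i, u ≤ v := by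
  set A := (vals t i).filter (Node.a i · ∈ X)
  have hvA : v ∈ A := mem_filter.mpr ⟨hv, hvX⟩
  have hxA : t x₀ i ∈ A := mem_filter.mpr ⟨mem_vals t x₀ i, hx⟩
  have hmin := mem_filter.mp (A.min'_mem ⟨v, hvA⟩)
  refine ⟨A.min' ⟨v, hvA⟩,
    mem_filter.mpr ⟨hmin.1, hmin.2, A.min'_le _ hxA, fun w hw hwX => ?_⟩, A.min'_le v hvA⟩
  exact (A.min'_le w (mem_filter.mpr ⟨hw.1, hwX⟩)).not_gt hw.2.2.1

lemma exists_upExit_lt (hx : Node.a i (t x₀ i) ∈ X) {w : ℝ} (hw : w ∈ vals t i)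
    (hwX : Node.a i w ∉ X) (hxw : t x₀ i < w) : ∃ u ∈ upExits t x₀ X i, u < w := by
  set B := (vals t i).filter fun v => Node.a i v ∈ X ∧ v < w
  have hxB : t x₀ i ∈ B := mem_filter.mpr ⟨mem_vals t x₀ i, hx, hxw⟩
  obtain ⟨hu, huX, huw⟩ := mem_filter.mp (B.max'_mem ⟨_, hxB⟩)
  refine ⟨B.max' ⟨_, hxB⟩,
    mem_filter.mpr ⟨hu, huX, B.le_max' _ hxB, fun v hv hvX => ?_⟩, huw⟩
  rcases lt_trichotomy v w with hvw | rfl | hwv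
  · exact (B.le_max' v (mem_filter.mpr ⟨hv.2.1, hvX, hvw⟩)).not_gt hv.2.2.1
  · exact hwX hvX
  · exact hv.2.2.2 w hw ⟨huw, hwv⟩

lemma exists_downExit_gt (hx : Node.a i (t x₀ i) ∈ X) {w : ℝ} (hw : w ∈ vals t i)
    (hwX : Node.a i w ∉ X) (hwx : w < t x₀ i) : ∃ u ∈ downExits t x₀ X i, w < u := by
  set B := (vals t i).filter fun v => Node.a i v ∈ X ∧ w < v
  have hxB : t x₀ i ∈ B := mem_filter.mpr ⟨mem_vals t x₀ i, hx, hwx⟩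
  obtain ⟨hu, huX, hwu⟩ := mem_filter.mp (B.min'_mem ⟨_, hxB⟩)
  refine ⟨B.min' ⟨_, hxB⟩,
    mem_filter.mpr ⟨hu, huX, B.min'_le _ hxB, fun v hv hvX => ?_⟩, hwu⟩
  rcases lt_trichotomy v w with hvw | rfl | hwv
  · exact hv.2.2.2 w hw ⟨hvw, hwu⟩
  · exact hwX hvX
  · exact (B.min'_le v (mem_filter.mpr ⟨hv.1, hvX, hwv⟩)).not_gt hv.2.2.1

lemma card_compl_le_crossings (hx : Node.a i (t x₀ i) ∈ X) {U : Finset (Fin n)}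
    (hU : ∀ ℓ, ℓ ∈ U ↔ Node.b ℓ ∈ X) :
    (n - #U : ℝ) ≤ #{ℓ | Node.a i (t ℓ i) ∈ X ∧ Node.b ℓ ∉ X} +
      ∑ u ∈ upExits t x₀ X i, (#{ℓ | u < t ℓ i} : ℝ) +
      ∑ u ∈ downExits t x₀ X i, (#{ℓ | t ℓ i < u} : ℝ) := by
  have hcover : Uᶜ ⊆ ({ℓ | Node.a i (t ℓ i) ∈ X ∧ Node.b ℓ ∉ X} : Finset (Fin n)) ∪
      (upExits t x₀ X i).biUnion (fun u => {ℓ | u < t ℓ i}) ∪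
      (downExits t x₀ X i).biUnion (fun u => {ℓ | t ℓ i < u}) := by
    intro ℓ hℓ
    have hb : Node.b ℓ ∉ X := (hU ℓ).not.mp (mem_compl.mp hℓ)
    simp only [mem_union, mem_biUnion, mem_filter, mem_univ, true_and]
    by_cases hX : Node.a i (t ℓ i) ∈ X
    · exact .inl (.inl ⟨hX, hb⟩)
    rcases lt_trichotomy (t x₀ i) (t ℓ i) with h | h | h
    · exact .inl (.inr (exists_upExit_lt hx (mem_vals t ℓ i) hX h))
    · exact absurd (h ▸ hx) hX
    · exact .inr (exists_downExit_gt hx (mem_vals t ℓ i) hX h)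
  have hcard := (card_le_card hcover).trans <| (card_union_le _ _).trans <|
    add_le_add ((card_union_le _ _).trans (add_le_add le_rfl card_biUnion_le)) card_biUnion_le
  have hcompl : (#Uᶜ : ℝ) = n - #U := by
    rw [eq_sub_iff_add_eq]
    exact_mod_cast (card_compl_add_card U).trans (Fintype.card_fin n)
  rw [← hcompl]
  exact_mod_cast hcard

lemma le_coordCut (hα : 0 < α) (hx : Node.a i (t x₀ i) ∈ X) {U : Finset (Fin n)}
    (hU : ∀ ℓ, ℓ ∈ U ↔ Node.b ℓ ∈ X) {W : Finset (Fin n)} (hW : W.Nonempty)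
    (hWX : ∀ ℓ ∈ W, Node.a i (t ℓ i) ∈ X) :
    (n - #U) + (m / α) * (upperEnv t W i - lowerEnv t W i) ≤ coordCut t x₀ α X i := by
  have hmα : 0 ≤ (m : ℝ) / α := div_nonneg (Nat.cast_nonneg m) hα.le
  obtain ⟨ℓhi, hℓhi, hhi⟩ := exists_eq_upperEnv (t := t) (i := i) hW
  obtain ⟨ℓlo, hℓlo, hlo⟩ := exists_eq_lowerEnv (t := t) (i := i) hW
  obtain ⟨uhi, huhi, hhi_le⟩ := exists_upExit_ge hx (mem_vals t ℓhi i) (hWX ℓhi hℓhi)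
  obtain ⟨ulo, hulo, hlo_ge⟩ := exists_downExit_le hx (mem_vals t ℓlo i) (hWX ℓlo hℓlo)
  have hup : (m / α) * (uhi - t x₀ i) ≤ ∑ u ∈ upExits t x₀ X i, (m / α) * (u - t x₀ i) :=
    single_le_sum (fun u hu => mul_nonneg hmα (sub_nonneg.mpr (mem_filter.mp hu).2.2.1)) huhi
  have hdown : (m / α) * (t x₀ i - ulo) ≤ ∑ u ∈ downExits t x₀ X i, (m / α) * (t x₀ i - u) :=
    single_le_sum (fun u hu => mul_nonneg hmα (sub_nonneg.mpr (mem_filter.mp hu).2.2.1)) hulo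
  have hwidth : (m / α) * (upperEnv t W i - lowerEnv t W i) ≤
      (m / α) * (uhi - t x₀ i) + (m / α) * (t x₀ i - ulo) := by
    rw [← mul_add]; exact mul_le_mul_of_nonneg_left (by linarith) hmα
  simp only [coordCut, upW, downW, sum_add_distrib]
  linarith [card_compl_le_crossings hx hU]

theorem bandValue_add_le_cutVal (hα : 0 < α) (hsnk : Node.snk ∉ X)
    (hsrc : ∀ i, Node.a i (t x₀ i) ∈ X) (hb : ∀ ℓ, Node.b ℓ ∈ X → ∀ i, Node.a i (t ℓ i) ∈ X)
    {U : Finset (Fin n)} (hU : ∀ ℓ, ℓ ∈ U ↔ Node.b ℓ ∈ X) {W : Finset (Fin n)}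
    (hW : W.Nonempty) (hWX : ∀ ℓ ∈ W, ∀ i, Node.a i (t ℓ i) ∈ X) :
    ENNReal.ofReal (bandValue t α W + m * (#W - #U)) ≤ cutVal t (t x₀) α X := by
  rw [cutVal_eq_sum_coordCut hα hsnk hsrc hb]
  refine ENNReal.ofReal_le_ofReal ?_
  have := sum_le_sum fun i (_ : i ∈ univ) =>
    le_coordCut hα (hsrc i) hU hW fun ℓ hℓ => hWX ℓ hℓ i
  simp only [sum_add_distrib, sum_const, card_univ, Fintype.card_fin, nsmul_eq_mul, ← mul_sum,
    ← score1Idx_eq_sum_env] at this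
  rw [bandValue]
  linarith

end LowerBound

section MinCut

variable {t : Fin n → Fin m → ℝ} {x₀ : Fin n} {α : ℝ} {X : Set (Node n m)}

lemma wgt_le_cutVal {x : Fin m → ℝ} {p q : Node n m} (hp : p ∈ X) (hq : q ∉ X) :
    wgt t x α p q ≤ cutVal t x α X := by
  rw [cutVal]
  simpa [hp, hq] using ENNReal.le_tsum (f := fun pq : Node n m × Node n m =>
    if pq.1 ∈ X ∧ pq.2 ∉ X then wgt t x α pq.1 pq.2 else 0) (p, q)

def IsMinCut (t : Fin n → Fin m → ℝ) (x : Fin m → ℝ) (α : ℝ) (X : Set (Node n m)) : Prop :=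
  Node.src ∈ X ∧ Node.snk ∉ X ∧
    ∀ X' : Set (Node n m), Node.src ∈ X' → Node.snk ∉ X' → cutVal t x α X ≤ cutVal t x α X'

namespace IsMinCut

lemma cutVal_le_bandValue (hX : IsMinCut t (t x₀) α X) (hα : 0 < α) {S : Finset (Fin n)}
    (hS : x₀ ∈ S) : cutVal t (t x₀) α X ≤ ENNReal.ofReal (bandValue t α S) :=
  (hX.2.2 (bandCut t S) trivial id).trans (cutVal_bandCut hα hS).le

lemma mem_of_wgt_eq_top (hX : IsMinCut t (t x₀) α X) (hα : 0 < α) {p q : Node n m}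
    (hp : p ∈ X) (hw : wgt t (t x₀) α p q = ⊤) : q ∈ X := by
  by_contra hq
  have h := (wgt_le_cutVal hp hq).trans (hX.cutVal_le_bandValue hα (mem_singleton_self x₀))
  exact ENNReal.ofReal_ne_top (top_le_iff.mp (hw ▸ h))

lemma seed_a_mem (hX : IsMinCut t (t x₀) α X) (hα : 0 < α) (i : Fin m) :
    Node.a i (t x₀ i) ∈ X :=
  hX.mem_of_wgt_eq_top hα hX.1 (if_pos rfl)

lemma a_mem_of_b_mem (hX : IsMinCut t (t x₀) α X) (hα : 0 < α) {ℓ : Fin n}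
    (hℓ : Node.b ℓ ∈ X) (i : Fin m) : Node.a i (t ℓ i) ∈ X :=
  hX.mem_of_wgt_eq_top hα hℓ (if_pos rfl)

lemma bandValue_add_le_cutVal (hX : IsMinCut t (t x₀) α X) (hα : 0 < α) {U : Finset (Fin n)}
    (hU : ∀ ℓ, ℓ ∈ U ↔ Node.b ℓ ∈ X) {W : Finset (Fin n)} (hW : W.Nonempty)
    (hWU : W ⊆ insert x₀ U) :
    ENNReal.ofReal (bandValue t α W + m * (#W - #U)) ≤ cutVal t (t x₀) α X := by
  refine RegBand.bandValue_add_le_cutVal hα hX.2.1 (hX.seed_a_mem hα)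
    (fun _ => hX.a_mem_of_b_mem hα) hU hW fun ℓ hℓ => ?_
  rcases mem_insert.mp (hWU hℓ) with rfl | hℓU
  · exact hX.seed_a_mem hα
  · exact hX.a_mem_of_b_mem hα ((hU ℓ).mp hℓU)

lemma seed_mem (hX : IsMinCut t (t x₀) α X) (hα : 0 < α) (hm : 0 < m) {U : Finset (Fin n)}
    (hU : ∀ ℓ, ℓ ∈ U ↔ Node.b ℓ ∈ X) : x₀ ∈ U := by
  by_contra hx₀
  have hW := insert_nonempty x₀ U
  have h := (hX.bandValue_add_le_cutVal hα hU hW subset_rfl).trans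
    (hX.cutVal_le_bandValue hα (mem_insert_self x₀ U))
  rw [ENNReal.ofReal_le_ofReal_iff (bandValue_nonneg hα hW), card_insert_of_notMem hx₀] at h
  push_cast at h
  linarith [(Nat.cast_pos (α := ℝ)).mpr hm]

lemma cutVal_eq_bandValue (hX : IsMinCut t (t x₀) α X) (hα : 0 < α) (hm : 0 < m)
    {U : Finset (Fin n)} (hU : ∀ ℓ, ℓ ∈ U ↔ Node.b ℓ ∈ X) :
    cutVal t (t x₀) α X = ENNReal.ofReal (bandValue t α U) := by
  have hx₀U := hX.seed_mem hα hm hU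
  refine le_antisymm (hX.cutVal_le_bandValue hα hx₀U) ?_
  simpa using hX.bandValue_add_le_cutVal hα hU ⟨x₀, hx₀U⟩ (subset_insert x₀ U)

end IsMinCut

end MinCut

end RegBand

open RegBand in
theorem mincut_solves_regband_general {n m : ℕ} (hm : 0 < m)
    (t : Fin n → Fin m → ℝ)
    (x₀ : Fin n) (α : ℝ) (hα : 0 < α)
    (X : Set (Node n m)) (hsrc : Node.src ∈ X) (hsnk : Node.snk ∉ X)
    (hmin : ∀ X' : Set (Node n m), Node.src ∈ X' → Node.snk ∉ X' →
      cutVal t (t x₀) α X ≤ cutVal t (t x₀) α X')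
    (U : Finset (Fin n)) (hU : ∀ ℓ : Fin n, ℓ ∈ U ↔ Node.b ℓ ∈ X) :
    IsLeast {r : ℝ | ∃ S : Finset (Fin n), x₀ ∈ S ∧ r = regIdx t α S} (regIdx t α U) ∧
    cutVal t (t x₀) α X =
      ENNReal.ofReal ((n : ℝ) * (m : ℝ) + ((m : ℝ) / α) * regIdx t α U) := by
  have hX : IsMinCut t (t x₀) α X := ⟨hsrc, hsnk, hmin⟩
  have hcut := hX.cutVal_eq_bandValue hα hm hU
  refine ⟨⟨⟨U, hX.seed_mem hα hm hU, rfl⟩, ?_⟩, by rw [hcut, bandValue_eq_regIdx hα.ne']⟩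
  rintro _ ⟨S, hS, rfl⟩
  have h := hcut ▸ hX.cutVal_le_bandValue hα hS
  rw [ENNReal.ofReal_le_ofReal_iff (bandValue_nonneg hα ⟨x₀, hS⟩), bandValue_eq_regIdx hα.ne',
    bandValue_eq_regIdx hα.ne', add_le_add_iff_left] at h
  exact le_of_mul_le_mul_left h (div_pos (Nat.cast_pos.mpr hm) hα)

/-- Corollary to Proposition 3: if `(X, Xᶜ)` is a minimum `(θ,η)`-cut of the graph built
from the time series `t₁, …, t_n` (with seed `x = t x₀` and parameter `α > 0`), and
`U = {ℓ : b ℓ ∈ X}`, then `Reg(U;α)` equals the minimum of `Reg(·;α)` over all index sets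
containing the seed; equivalently, the minimum cut value equals
`n·m + (m/α) · min Reg`. -/
theorem mincut_solves_regband {n m : ℕ} (hn : 0 < n) (hm : 0 < m)
    (t : Fin n → Fin m → ℝ) (htinj : Function.Injective t)
    (x₀ : Fin n) (α : ℝ) (hα : 0 < α)
    (X : Set (Node n m)) (hsrc : Node.src ∈ X) (hsnk : Node.snk ∉ X)
    (hmin : ∀ X' : Set (Node n m), Node.src ∈ X' → Node.snk ∉ X' →
      cutVal t (t x₀) α X ≤ cutVal t (t x₀) α X')
    (U : Finset (Fin n)) (hU : ∀ ℓ : Fin n, ℓ ∈ U ↔ Node.b ℓ ∈ X) :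
    IsLeast {r : ℝ | ∃ S : Finset (Fin n), x₀ ∈ S ∧ r = regIdx t α S} (regIdx t α U) ∧
    cutVal t (t x₀) α X =
      ENNReal.ofReal ((n : ℝ) * (m : ℝ) + ((m : ℝ) / α) * regIdx t α U) :=
  mincut_solves_regband_general hm t x₀ α hα X hsrc hsnk hmin U hU

end
end
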